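/- arXiv:1104.0508 — 4 statements merged into one kernel-verified Lean document; each statement's English description precedes it below -/
import Mathlib

section
/- Let Ψ be a concave distortion that is differentiable on (0,1) and whose left derivative at 1, Ψ'_−(1) := lim_{x↑1}(1−Ψ(x))/(1−x), is strictly positive. Suppose (Ψ_t)_{t≥0} is a concave distortion semigroup with Ψ_1 = Ψ whose generator G(x)=lim_{t↓0}(Ψ_t(x)−x)/t exists for all x∈(0,1). Then for every x∈(0,1), G(x) = lim_{n→∞} [ln(Ψ'_−(1)) · (Ψ^n(x) − 1)] / [Ψ'(x)·Ψ'(Ψ(x))·⋯·Ψ'(Ψ^{n−1}(x))], where Ψ^n denotes the n-fold composition Ψ∘⋯∘Ψ. -/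
open Set MeasureTheory Filter Topology

/-- The family of distortions associated with a generator `G`:
`Ψ_t(0) = 0` and, for `x ∈ (0,1]`,
`Ψ_t(x) = inf {y ∈ [x,1] : ∫_x^y 1/G(s) ds = t}` with the convention `inf ∅ = 1`
(realized by adding `1` to the set, which does not change the infimum when the set
is nonempty since all its elements lie in `[x,1]`). -/
noncomputable def assocPsi (G : ℝ → ℝ) (t x : ℝ) : ℝ :=
  if x = 0 then 0
  else sInf ({y | y ∈ Set.Icc x 1 ∧ ∫ s in x..y, (G s)⁻¹ = t} ∪ {1})

/-- A concave distortion: a nondecreasing concave function `[0,1] → [0,1]`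
with `Ψ(0) = 0` and `Ψ(1) = 1`. -/
def IsConcaveDistortion (Ψ : ℝ → ℝ) : Prop :=
  MonotoneOn Ψ (Set.Icc 0 1) ∧ ConcaveOn ℝ (Set.Icc 0 1) Ψ ∧ Ψ 0 = 0 ∧ Ψ 1 = 1

/-- A concave distortion semigroup: a family `(Ψ_t)_{t ≥ 0}` of concave distortions
with `Ψ_s ∘ Ψ_t = Ψ_{s+t}` for `s, t ≥ 0`. -/
def IsConcaveDistortionSemigroup (Ψ : ℝ → ℝ → ℝ) : Prop :=
  (∀ t, 0 ≤ t → IsConcaveDistortion (Ψ t)) ∧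
  (∀ s t, 0 ≤ s → 0 ≤ t → ∀ x ∈ Set.Icc (0:ℝ) 1, Ψ s (Ψ t x) = Ψ (s + t) x)

/-!
Write `D z = G z / (1 - z)`. Differentiating `Ψ_t ∘ Ψ = Ψ ∘ Ψ_t` at `t = 0` gives
`G (Ψ z) = Ψ'(z) G z`, hence `G (Ψⁿ x) = Ψ'(x) ⋯ Ψ'(Ψⁿ⁻¹ x) · G x`, and the claim becomes
`D (Ψⁿ x) → -log L`.

Cutting `[0, 1]` into `N` steps of length `1/N` and telescoping `t ↦ log (1 - Ψ_t z)`, the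
antitonicity of `w ↦ (1 - Ψ_s w) / (1 - w)` (concavity) together with `z ≤ Ψ_{k/N} z ≤ Ψ z`
gives, as `N → ∞`, `D z ≤ -log ((1 - Ψ z) / (1 - z)) ≤ D (Ψ z)`. If `L < 1`, `Ψ` has no fixed
point in `(0, 1)`, so `Ψⁿ x → 1` and the middle term tends to `-log L`. If `L = 1`, concavity
forces `Ψ x = x`, and both sides vanish.
-/

lemma tendsto_nat_mul_log_one_sub {f : ℝ → ℝ} {g : ℝ} (hf : HasDerivWithinAt f g (Ioi 0) 0)
    (h1 : f 0 ≠ 1) :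
    Tendsto (fun N : ℕ => (N : ℝ) * (Real.log (1 - f (N : ℝ)⁻¹) - Real.log (1 - f 0))) atTop
      (𝓝 (-g / (1 - f 0))) := by
  have hlog := (hf.const_sub 1).log (sub_ne_zero.2 h1.symm)
  rw [hasDerivWithinAt_iff_tendsto_slope, sdiff_singleton_eq_self self_notMem_Ioi] at hlog
  refine (hlog.comp (tendsto_inv_atTop_nhdsGT_zero.comp tendsto_natCast_atTop_atTop)).congr
    fun N => ?_
  simp [slope_def_field, div_eq_mul_inv, mul_comm]

lemma eq_mul_of_hasDerivWithinAt_comp {f₁ f₂ φ : ℝ → ℝ} {a b d x : ℝ} {s : Set ℝ}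
    (hs : UniqueDiffWithinAt ℝ s x) (h₁ : HasDerivWithinAt f₁ a s x)
    (h₂ : HasDerivWithinAt f₂ b s x) (hφ : HasDerivAt φ d (f₁ x))
    (h : EqOn f₂ (φ ∘ f₁) (insert x s)) : b = d * a :=
  hs.eq_deriv _ h₂ ((hφ.comp_hasDerivWithinAt x h₁).congr (h.mono (subset_insert _ _))
    (h (mem_insert _ _)))

namespace IsConcaveDistortion

variable {F : ℝ → ℝ}

lemma apply_mem_Icc (hF : IsConcaveDistortion F) {z : ℝ} (hz : z ∈ Icc (0 : ℝ) 1) :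
    F z ∈ Icc (0 : ℝ) 1 := by
  obtain ⟨hmono, -, h0, h1⟩ := hF
  exact ⟨h0 ▸ hmono ⟨le_rfl, zero_le_one⟩ hz hz.1, h1 ▸ hmono hz ⟨zero_le_one, le_rfl⟩ hz.2⟩

lemma le_apply (hF : IsConcaveDistortion F) {z : ℝ} (hz : z ∈ Icc (0 : ℝ) 1) : z ≤ F z := by
  have := hF.2.1.2 (x := 1) (y := 0) ⟨zero_le_one, le_rfl⟩ ⟨le_rfl, zero_le_one⟩ hz.1
    (sub_nonneg.2 hz.2) (add_sub_cancel z 1)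
  simpa [hF.2.2.1, hF.2.2.2] using this

lemma antitoneOn_div (hF : IsConcaveDistortion F) :
    AntitoneOn (fun z => F z / z) (Ioc 0 1) := by
  intro w hw z hz hwz
  have := hF.2.1.slope_anti (x := 0) ⟨le_rfl, zero_le_one⟩
    ⟨Ioc_subset_Icc_self hw, hw.1.ne'⟩ ⟨Ioc_subset_Icc_self hz, hz.1.ne'⟩ hwz
  simpa [slope_def_field, hF.2.2.1] using this

lemma antitoneOn_ratio (hF : IsConcaveDistortion F) :
    AntitoneOn (fun z => (1 - F z) / (1 - z)) (Ico 0 1) := by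
  intro y hy z hz hyz
  have := hF.2.1.slope_anti (x := 1) ⟨zero_le_one, le_rfl⟩
    ⟨Ico_subset_Icc_self hy, hy.2.ne⟩ ⟨Ico_subset_Icc_self hz, hz.2.ne⟩ hyz
  simpa only [slope_def_field, hF.2.2.2, ← neg_sub (1 : ℝ), neg_div_neg_eq] using this

lemma log_ratio_anti (hF : IsConcaveDistortion F) {y z : ℝ} (hy : 0 ≤ y) (hyz : y ≤ z)
    (hz : z < 1) (hFz : F z < 1) :
    Real.log (1 - F z) - Real.log (1 - z) ≤ Real.log (1 - F y) - Real.log (1 - y) := by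
  have hratio := hF.antitoneOn_ratio ⟨hy, hyz.trans_lt hz⟩ ⟨hy.trans hyz, hz⟩ hyz
  have hpos : 0 < (1 - F z) / (1 - z) := div_pos (by linarith) (by linarith)
  have hFy : F y < 1 := (hF.1 ⟨hy, (hyz.trans hz.le)⟩ ⟨hy.trans hyz, hz.le⟩ hyz).trans_lt hFz
  rw [← Real.log_div (by linarith) (by linarith), ← Real.log_div (by linarith) (by linarith)]
  exact Real.log_le_log hpos hratio

lemma le_ratio_of_tendsto (hF : IsConcaveDistortion F) {L : ℝ}
    (hL : Tendsto (fun z => (1 - F z) / (1 - z)) (𝓝[<] 1) (𝓝 L)) {z : ℝ} (hz : z ∈ Ico (0 : ℝ) 1) :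
    L ≤ (1 - F z) / (1 - z) := by
  refine le_of_tendsto hL ?_
  filter_upwards [Ioo_mem_nhdsLT hz.2] with w hw
  exact hF.antitoneOn_ratio hz ⟨hz.1.trans hw.1.le, hw.2⟩ hw.1.le

lemma le_one_of_tendsto (hF : IsConcaveDistortion F) {L : ℝ}
    (hL : Tendsto (fun z => (1 - F z) / (1 - z)) (𝓝[<] 1) (𝓝 L)) : L ≤ 1 := by
  refine (hF.le_ratio_of_tendsto hL ⟨le_rfl, zero_lt_one⟩).trans ?_
  simp [hF.2.2.1]

lemma apply_eq_self_of_tendsto_one (hF : IsConcaveDistortion F)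
    (hL : Tendsto (fun z => (1 - F z) / (1 - z)) (𝓝[<] 1) (𝓝 1)) {z : ℝ} (hz : z ∈ Ico (0 : ℝ) 1) :
    F z = z := by
  have h := hF.le_ratio_of_tendsto hL hz
  rw [le_div_iff₀ (sub_pos.2 hz.2), one_mul] at h
  exact le_antisymm (by linarith) (hF.le_apply (Ico_subset_Icc_self hz))

lemma mapsTo_Ioo (hF : IsConcaveDistortion F) {L : ℝ}
    (hL : Tendsto (fun z => (1 - F z) / (1 - z)) (𝓝[<] 1) (𝓝 L)) (hL0 : 0 < L) :
    MapsTo F (Ioo 0 1) (Ioo 0 1) := by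
  intro z hz
  have hpos := hL0.trans_le (hF.le_ratio_of_tendsto hL (Ioo_subset_Ico_self hz))
  exact ⟨hz.1.trans_le (hF.le_apply (Ioo_subset_Icc_self hz)),
    by linarith [(div_pos_iff_of_pos_right (sub_pos.2 hz.2)).1 hpos]⟩

lemma one_le_of_isFixedPt (hF : IsConcaveDistortion F) {L : ℝ}
    (hL : Tendsto (fun z => (1 - F z) / (1 - z)) (𝓝[<] 1) (𝓝 L)) {p : ℝ} (hp : p ∈ Ioo (0 : ℝ) 1)
    (hfix : F p = p) : 1 ≤ L := by
  refine ge_of_tendsto hL ?_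
  filter_upwards [Ioo_mem_nhdsLT hp.2] with w hw
  have hdiv : F w / w ≤ F p / p :=
    hF.antitoneOn_div ⟨hp.1, hp.2.le⟩ ⟨hp.1.trans hw.1, hw.2.le⟩ hw.1.le
  rw [hfix, div_self hp.1.ne', div_le_one (hp.1.trans hw.1)] at hdiv
  rw [le_div_iff₀ (sub_pos.2 hw.2)]
  linarith

lemma tendsto_iterate_nhdsLT_one (hF : IsConcaveDistortion F)
    {L : ℝ} (hL : Tendsto (fun z => (1 - F z) / (1 - z)) (𝓝[<] 1) (𝓝 L)) (hL1 : L < 1)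
    (hcont : ContinuousOn F (Ioo 0 1)) (hmaps : MapsTo F (Ioo 0 1) (Ioo 0 1)) {x : ℝ}
    (hx : x ∈ Ioo (0 : ℝ) 1) : Tendsto (fun n => F^[n] x) atTop (𝓝[<] 1) := by
  have hmem : ∀ n, F^[n] x ∈ Ioo (0 : ℝ) 1 := fun n => hmaps.iterate n hx
  have hmono : Monotone fun n => F^[n] x := monotone_nat_of_le_succ fun n => by
    rw [Function.iterate_succ_apply']
    exact hF.le_apply (Ioo_subset_Icc_self (hmem n))
  have hbdd : BddAbove (range fun n => F^[n] x) := ⟨1, by rintro _ ⟨n, rfl⟩; exact (hmem n).2.le⟩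
  have hlim := tendsto_atTop_ciSup hmono hbdd
  have hsup : ⨆ n, F^[n] x = 1 := by
    by_contra hne
    have hp : ⨆ n, F^[n] x ∈ Ioo (0 : ℝ) 1 :=
      ⟨(hmem 0).1.trans_le (le_ciSup hbdd 0), (ciSup_le fun n => (hmem n).2.le).lt_of_ne hne⟩
    have hfix := isFixedPt_of_tendsto_iterate hlim (hcont.continuousAt (Ioo_mem_nhds hp.1 hp.2))
    linarith [hF.one_le_of_isFixedPt hL hp hfix]
  exact tendsto_nhdsWithin_iff.2 ⟨hsup ▸ hlim, Eventually.of_forall fun n => (hmem n).2⟩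

end IsConcaveDistortion

namespace IsConcaveDistortionSemigroup

variable {Ψ : ℝ → ℝ → ℝ}

lemma apply_mem_Icc (hΨ : IsConcaveDistortionSemigroup Ψ) {t z : ℝ} (ht : 0 ≤ t)
    (hz : z ∈ Icc (0 : ℝ) 1) : Ψ t z ∈ Icc (0 : ℝ) 1 :=
  (hΨ.1 t ht).apply_mem_Icc hz

lemma apply_le_apply_of_le (hΨ : IsConcaveDistortionSemigroup Ψ) {s t z : ℝ} (hs : 0 ≤ s)
    (hst : s ≤ t) (hz : z ∈ Icc (0 : ℝ) 1) : Ψ s z ≤ Ψ t z := by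
  have h := hΨ.2 (t - s) s (sub_nonneg.2 hst) hs z hz
  rw [sub_add_cancel] at h
  exact h ▸ (hΨ.1 _ (sub_nonneg.2 hst)).le_apply (hΨ.apply_mem_Icc hs hz)

lemma apply_zero_of_tendsto (hΨ : IsConcaveDistortionSemigroup Ψ) {z g : ℝ}
    (hz : z ∈ Icc (0 : ℝ) 1) (hg : Tendsto (fun t => (Ψ t z - z) / t) (𝓝[>] 0) (𝓝 g)) :
    Ψ 0 z = z := by
  have hcont : Tendsto (fun t => Ψ t z) (𝓝[>] 0) (𝓝 z) := by
    have h := (tendsto_nhdsWithin_of_tendsto_nhds (tendsto_id (x := 𝓝 (0 : ℝ)))).mul hg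
    rw [zero_mul] at h
    refine (zero_add z ▸ h.add_const z).congr' ?_
    filter_upwards [self_mem_nhdsWithin] with t (ht : 0 < t)
    simp [mul_div_cancel₀ _ ht.ne']
  refine le_antisymm (ge_of_tendsto hcont ?_) ((hΨ.1 0 le_rfl).le_apply hz)
  filter_upwards [self_mem_nhdsWithin] with t (ht : 0 < t)
  exact hΨ.apply_le_apply_of_le le_rfl ht.le hz

lemma hasDerivWithinAt_of_tendsto (hΨ : IsConcaveDistortionSemigroup Ψ) {z g : ℝ}
    (hz : z ∈ Icc (0 : ℝ) 1) (hg : Tendsto (fun t => (Ψ t z - z) / t) (𝓝[>] 0) (𝓝 g)) :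
    HasDerivWithinAt (fun t => Ψ t z) g (Ioi 0) 0 := by
  rw [hasDerivWithinAt_iff_tendsto_slope, sdiff_singleton_eq_self self_notMem_Ioi]
  refine hg.congr fun t => ?_
  rw [slope_def_field, hΨ.apply_zero_of_tendsto hz hg, sub_zero]

lemma generator_eq_zero_of_apply_one (hΨ : IsConcaveDistortionSemigroup Ψ) {z g : ℝ}
    (hz : z ∈ Icc (0 : ℝ) 1) (h1 : Ψ 1 z = z)
    (hg : Tendsto (fun t => (Ψ t z - z) / t) (𝓝[>] 0) (𝓝 g)) : g = 0 := by
  refine tendsto_nhds_unique hg (tendsto_const_nhds.congr' ?_)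
  filter_upwards [Ioc_mem_nhdsGT zero_lt_one] with t ht
  have hfix : Ψ t z = z :=
    le_antisymm ((hΨ.apply_le_apply_of_le ht.1.le ht.2 hz).trans h1.le)
      ((hΨ.1 t ht.1.le).le_apply hz)
  rw [hfix, sub_self, zero_div]

lemma log_one_sub_sub_eq_sum (hΨ : IsConcaveDistortionSemigroup Ψ) {z s : ℝ}
    (hz : z ∈ Icc (0 : ℝ) 1) (h0 : Ψ 0 z = z) (hs : 0 ≤ s) (N : ℕ) :
    Real.log (1 - Ψ (N * s) z) - Real.log (1 - z) =
      ∑ k ∈ Finset.range N, (Real.log (1 - Ψ s (Ψ (k * s) z)) - Real.log (1 - Ψ (k * s) z)) := by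
  have hstep : ∀ k : ℕ, Ψ s (Ψ (k * s) z) = Ψ ((k + 1 : ℕ) * s) z := fun k => by
    rw [hΨ.2 s _ hs (by positivity) z hz]
    push_cast
    ring_nf
  simp only [hstep]
  rw [Finset.sum_range_sub (fun k : ℕ => Real.log (1 - Ψ (k * s) z)), Nat.cast_zero, zero_mul,
    h0]

lemma log_one_sub_sub_le_nat_mul (hΨ : IsConcaveDistortionSemigroup Ψ) {z s : ℝ}
    (hz : z ∈ Icc (0 : ℝ) 1) (h0 : Ψ 0 z = z) (hs : 0 ≤ s) (N : ℕ) (h1 : Ψ (N * s) z < 1) :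
    Real.log (1 - Ψ (N * s) z) - Real.log (1 - z) ≤
      N * (Real.log (1 - Ψ s z) - Real.log (1 - z)) := by
  rw [hΨ.log_one_sub_sub_eq_sum hz h0 hs N]
  refine (Finset.sum_le_card_nsmul _ _ (Real.log (1 - Ψ s z) - Real.log (1 - z))
    fun k hk => ?_).trans_eq (by simp)
  have hkN : (k + 1 : ℝ) * s ≤ N * s := by
    gcongr
    exact_mod_cast Finset.mem_range.1 hk
  have hks : 0 ≤ (k : ℝ) * s := by positivity
  have hstep : Ψ s (Ψ (k * s) z) < 1 := by
    rw [hΨ.2 s _ hs hks z hz]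
    exact (hΨ.apply_le_apply_of_le (by positivity) (by linarith) hz).trans_lt h1
  exact (hΨ.1 s hs).log_ratio_anti hz.1 ((hΨ.1 _ hks).le_apply hz)
    (((hΨ.1 s hs).le_apply (hΨ.apply_mem_Icc hks hz)).trans_lt hstep) hstep

lemma nat_mul_le_log_one_sub_sub (hΨ : IsConcaveDistortionSemigroup Ψ) {z s : ℝ}
    (hz : z ∈ Icc (0 : ℝ) 1) (h0 : Ψ 0 z = z) (hs : 0 ≤ s) (N : ℕ)
    (h1 : Ψ s (Ψ (N * s) z) < 1) :
    N * (Real.log (1 - Ψ s (Ψ (N * s) z)) - Real.log (1 - Ψ (N * s) z)) ≤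
      Real.log (1 - Ψ (N * s) z) - Real.log (1 - z) := by
  rw [hΨ.log_one_sub_sub_eq_sum hz h0 hs N]
  refine (Finset.card_nsmul_le_sum _ _
    (Real.log (1 - Ψ s (Ψ (N * s) z)) - Real.log (1 - Ψ (N * s) z))
    fun k hk => ?_).trans_eq' (by simp)
  have hks : 0 ≤ (k : ℝ) * s := by positivity
  have hNs : 0 ≤ (N : ℝ) * s := by positivity
  have hkN : (k : ℝ) * s ≤ N * s := by
    gcongr
    exact_mod_cast (Finset.mem_range.1 hk).le
  exact (hΨ.1 s hs).log_ratio_anti (hΨ.apply_mem_Icc hks hz).1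
    (hΨ.apply_le_apply_of_le hks hkN hz)
    (((hΨ.1 s hs).le_apply (hΨ.apply_mem_Icc hNs hz)).trans_lt h1) h1

lemma log_one_sub_sub_le (hΨ : IsConcaveDistortionSemigroup Ψ) {z g : ℝ}
    (hz : z ∈ Icc (0 : ℝ) 1) (h0 : Ψ 0 z = z)
    (hg : HasDerivWithinAt (fun t => Ψ t z) g (Ioi 0) 0) (h1 : Ψ 1 z < 1) :
    Real.log (1 - Ψ 1 z) - Real.log (1 - z) ≤ -g / (1 - z) := by
  have hlim := tendsto_nat_mul_log_one_sub hg
    (h0 ▸ ((hΨ.1 1 zero_le_one).le_apply hz).trans_lt h1).ne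
  rw [h0] at hlim
  refine ge_of_tendsto hlim ?_
  filter_upwards [eventually_ne_atTop 0] with N hN
  have hN1 : (N : ℝ) * (N : ℝ)⁻¹ = 1 := mul_inv_cancel₀ (Nat.cast_ne_zero.2 hN)
  have h := hΨ.log_one_sub_sub_le_nat_mul hz h0 (inv_nonneg.2 N.cast_nonneg) N (hN1 ▸ h1)
  rwa [hN1] at h

lemma le_log_one_sub_sub (hΨ : IsConcaveDistortionSemigroup Ψ) {z g : ℝ}
    (hz : z ∈ Icc (0 : ℝ) 1) (h0 : Ψ 0 z = z) (h0' : Ψ 0 (Ψ 1 z) = Ψ 1 z)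
    (hg : HasDerivWithinAt (fun t => Ψ t (Ψ 1 z)) g (Ioi 0) 0) (h1 : Ψ 1 (Ψ 1 z) < 1) :
    -g / (1 - Ψ 1 z) ≤ Real.log (1 - Ψ 1 z) - Real.log (1 - z) := by
  have hz' := hΨ.apply_mem_Icc zero_le_one hz
  have hlim := tendsto_nat_mul_log_one_sub hg
    (h0' ▸ ((hΨ.1 1 zero_le_one).le_apply hz').trans_lt h1).ne
  rw [h0'] at hlim
  refine le_of_tendsto hlim ?_
  filter_upwards [eventually_ne_atTop 0] with N hN
  have hN1 : (N : ℝ) * (N : ℝ)⁻¹ = 1 := mul_inv_cancel₀ (Nat.cast_ne_zero.2 hN)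
  have hinv : (N : ℝ)⁻¹ ≤ 1 :=
    inv_le_one_of_one_le₀ (Nat.one_le_cast.2 (Nat.one_le_iff_ne_zero.2 hN))
  have h := hΨ.nat_mul_le_log_one_sub_sub hz h0 (inv_nonneg.2 N.cast_nonneg) N
    (hN1 ▸ (hΨ.apply_le_apply_of_le (inv_nonneg.2 N.cast_nonneg) hinv hz').trans_lt h1)
  rwa [hN1] at h

end IsConcaveDistortionSemigroup

section Generator

variable {Ψ : ℝ → ℝ} {Ψt : ℝ → ℝ → ℝ} {G : ℝ → ℝ}

lemma generator_apply_eq (hsg : IsConcaveDistortionSemigroup Ψt)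
    (hΨ1 : ∀ x ∈ Icc (0 : ℝ) 1, Ψt 1 x = Ψ x) (hdiff : DifferentiableOn ℝ Ψ (Ioo 0 1))
    (hmaps : MapsTo Ψ (Ioo 0 1) (Ioo 0 1)) (h0 : ∀ z ∈ Ioo (0 : ℝ) 1, Ψt 0 z = z)
    (hd : ∀ z ∈ Ioo (0 : ℝ) 1, HasDerivWithinAt (fun t => Ψt t z) (G z) (Ioi 0) 0)
    {z : ℝ} (hz : z ∈ Ioo (0 : ℝ) 1) : G (Ψ z) = deriv Ψ z * G z := by
  have hzI := Ioo_subset_Icc_self hz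
  have hΨz : HasDerivAt Ψ (deriv Ψ z) (Ψt 0 z) :=
    (h0 z hz).symm ▸ (hdiff.differentiableAt (Ioo_mem_nhds hz.1 hz.2)).hasDerivAt
  refine eq_mul_of_hasDerivWithinAt_comp (uniqueDiffWithinAt_Ioi 0) (hd z hz) (hd _ (hmaps hz))
    hΨz ?_
  rw [Ioi_insert]
  intro t (ht : 0 ≤ t)
  show Ψt t (Ψ z) = Ψ (Ψt t z)
  rw [← hΨ1 z hzI, ← hΨ1 _ (hsg.apply_mem_Icc ht hzI), hsg.2 t 1 ht zero_le_one z hzI,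
    hsg.2 1 t zero_le_one ht z hzI, add_comm]

lemma generator_iterate_eq (hsg : IsConcaveDistortionSemigroup Ψt)
    (hΨ1 : ∀ x ∈ Icc (0 : ℝ) 1, Ψt 1 x = Ψ x) (hdiff : DifferentiableOn ℝ Ψ (Ioo 0 1))
    (hmaps : MapsTo Ψ (Ioo 0 1) (Ioo 0 1)) (h0 : ∀ z ∈ Ioo (0 : ℝ) 1, Ψt 0 z = z)
    (hd : ∀ z ∈ Ioo (0 : ℝ) 1, HasDerivWithinAt (fun t => Ψt t z) (G z) (Ioi 0) 0)
    {x : ℝ} (hx : x ∈ Ioo (0 : ℝ) 1) (n : ℕ) :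
    G (Ψ^[n] x) = (∏ i ∈ Finset.range n, deriv Ψ (Ψ^[i] x)) * G x := by
  induction n with
  | zero => simp
  | succ n ih =>
    rw [Function.iterate_succ_apply', generator_apply_eq hsg hΨ1 hdiff hmaps h0 hd
      (hmaps.iterate n hx), ih, Finset.prod_range_succ]
    ring

lemma tendsto_generator_div_iterate {L : ℝ}
    (hDer : Tendsto (fun x => (1 - Ψ x) / (1 - x)) (𝓝[<] 1) (𝓝 L)) (hL : 0 < L)
    (hsg : IsConcaveDistortionSemigroup Ψt) (hΨ1 : ∀ x ∈ Icc (0 : ℝ) 1, Ψt 1 x = Ψ x)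
    (hmaps : MapsTo Ψ (Ioo 0 1) (Ioo 0 1)) (h0 : ∀ z ∈ Ioo (0 : ℝ) 1, Ψt 0 z = z)
    (hd : ∀ z ∈ Ioo (0 : ℝ) 1, HasDerivWithinAt (fun t => Ψt t z) (G z) (Ioi 0) 0)
    {x : ℝ} (hx : x ∈ Ioo (0 : ℝ) 1) (hX : Tendsto (fun n => Ψ^[n] x) atTop (𝓝[<] 1)) :
    Tendsto (fun n => -G (Ψ^[n] x) / (1 - Ψ^[n] x)) atTop (𝓝 (Real.log L)) := by
  have hmem : ∀ n, Ψ^[n] x ∈ Ioo (0 : ℝ) 1 := fun n => hmaps.iterate n hx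
  have hstep : ∀ n, Ψt 1 (Ψ^[n] x) = Ψ^[n + 1] x := fun n => by
    rw [hΨ1 _ (Ioo_subset_Icc_self (hmem n)), Function.iterate_succ_apply']
  set ℓ := fun n => Real.log (1 - Ψ^[n + 1] x) - Real.log (1 - Ψ^[n] x)
  have hℓ : Tendsto ℓ atTop (𝓝 (Real.log L)) := by
    refine ((hDer.comp hX).log hL.ne').congr fun n => ?_
    rw [Function.comp_apply, ← Function.iterate_succ_apply' Ψ n x,
      Real.log_div (sub_pos.2 (hmem _).2).ne' (sub_pos.2 (hmem n).2).ne']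
  have hupper : ∀ n, ℓ n ≤ -G (Ψ^[n] x) / (1 - Ψ^[n] x) := fun n => by
    have h := hsg.log_one_sub_sub_le (Ioo_subset_Icc_self (hmem n)) (h0 _ (hmem n))
      (hd _ (hmem n)) ((hstep n).symm ▸ (hmem (n + 1)).2)
    rwa [hstep] at h
  have hlower : ∀ n, -G (Ψ^[n + 1] x) / (1 - Ψ^[n + 1] x) ≤ ℓ n := fun n => by
    have h := hsg.le_log_one_sub_sub (Ioo_subset_Icc_self (hmem n)) (h0 _ (hmem n))
      (hstep n ▸ h0 _ (hmem (n + 1))) (hstep n ▸ hd _ (hmem (n + 1)))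
      (by rw [hstep, hstep]; exact (hmem (n + 2)).2)
    rwa [hstep] at h
  refine (tendsto_add_atTop_iff_nat 1).1 ?_
  exact tendsto_of_tendsto_of_tendsto_of_le_of_le (hℓ.comp (tendsto_add_atTop_nat 1)) hℓ
    (fun n => hupper (n + 1)) hlower

end Generator

/-- the generator of a semigroup passing through a differentiable
concave distortion `Ψ` with `Ψ'₋(1) = L > 0` is given by
`G(x) = lim_n [ln(L)·(Ψⁿ(x)-1)] / [Ψ'(x)·Ψ'(Ψ(x))⋯Ψ'(Ψ^{n-1}(x))]`. -/
theorem stmt_12 (Ψ : ℝ → ℝ) (hΨ : IsConcaveDistortion Ψ)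
    (hdiff : DifferentiableOn ℝ Ψ (Set.Ioo 0 1))
    (L : ℝ) (hL : 0 < L)
    (hDer : Filter.Tendsto (fun x => (1 - Ψ x) / (1 - x))
      (nhdsWithin 1 (Set.Iio 1)) (nhds L))
    (Ψt : ℝ → ℝ → ℝ) (hsg : IsConcaveDistortionSemigroup Ψt)
    (hΨ1 : ∀ x ∈ Set.Icc (0:ℝ) 1, Ψt 1 x = Ψ x)
    (G : ℝ → ℝ)
    (hGen : ∀ x ∈ Set.Ioo (0:ℝ) 1,
      Filter.Tendsto (fun t => (Ψt t x - x) / t)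
        (nhdsWithin 0 (Set.Ioi 0)) (nhds (G x))) :
    ∀ x ∈ Set.Ioo (0:ℝ) 1,
      Filter.Tendsto (fun n : ℕ =>
          Real.log L * (Ψ^[n] x - 1) / ∏ i ∈ Finset.range n, deriv Ψ (Ψ^[i] x))
        Filter.atTop (nhds (G x)) := by
  intro x hx
  have h0 : ∀ z ∈ Ioo (0 : ℝ) 1, Ψt 0 z = z := fun z hz =>
    hsg.apply_zero_of_tendsto (Ioo_subset_Icc_self hz) (hGen z hz)
  have hd : ∀ z ∈ Ioo (0 : ℝ) 1, HasDerivWithinAt (fun t => Ψt t z) (G z) (Ioi 0) 0 :=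
    fun z hz => hsg.hasDerivWithinAt_of_tendsto (Ioo_subset_Icc_self hz) (hGen z hz)
  rcases (hΨ.le_one_of_tendsto hDer).lt_or_eq with hL1 | rfl
  · have hmaps := hΨ.mapsTo_Ioo hDer hL
    have hX := hΨ.tendsto_iterate_nhdsLT_one hDer hL1 hdiff.continuousOn hmaps hx
    have he := tendsto_generator_div_iterate hDer hL hsg hΨ1 hmaps h0 hd hx hX
    have hlogL : Real.log L ≠ 0 := (Real.log_neg hL hL1).ne
    have hlim := (tendsto_const_nhds (x := Real.log L * G x)).div he hlogL
    rw [mul_div_cancel_left₀ _ hlogL] at hlim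
    refine hlim.congr' ?_
    filter_upwards [he.eventually_ne hlogL] with n hn
    have hGn := generator_iterate_eq hsg hΨ1 hdiff hmaps h0 hd hx n
    rw [hGn] at hn
    rw [Pi.div_apply, hGn]
    have h1 : 1 - Ψ^[n] x ≠ 0 := (sub_pos.2 (hmaps.iterate n hx).2).ne'
    have hP : ∏ i ∈ Finset.range n, deriv Ψ (Ψ^[i] x) ≠ 0 := by
      rintro hP; simp [hP] at hn
    have hG : G x ≠ 0 := by
      rintro hG; simp [hG] at hn
    field_simp
    ring
  · have hfix := hΨ.apply_eq_self_of_tendsto_one hDer (Ioo_subset_Ico_self hx)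
    rw [hsg.generator_eq_zero_of_apply_one (Ioo_subset_Icc_self hx)
      ((hΨ1 x (Ioo_subset_Icc_self hx)).trans hfix) (hGen x hx)]
    simp
end

section
/- Let 0<a<b<1 and let Ψ:[0,1]→[0,1] be the piecewise linear concave distortion defined by Ψ(x) = (b/a)·x for x∈[0,a] and Ψ(x) = b + ((1−b)/(1−a))·(x−a) for x∈[a,1]. Then there exists no concave distortion semigroup (Ψ_t)_{t≥0} with Ψ_1 = Ψ. -/
open Set MeasureTheory Filter Topology

/-!
Put `φ = Ψ_{1/2}`, a concave distortion with `φ ∘ φ = Ψ`. At a fixed point `p ∈ {0, 1}` of `φ`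
the secant slope of `φ ∘ φ` is the product of two secant slopes of `φ`, each antitone by
concavity. Since `Ψ` has constant slope from `0` on `(0, a]` and from `1` on `[a, 1)`, the same
holds for `φ`, and composing gives `φ(a)² = a b` and `(1 - φ(a))² = (1 - a)(1 - b)`.
Subtracting, `2 φ(a) = a + b`, so `(a + b)² = 4 a b` and `a = b`.
-/

section SlopeAtFixedPoint

variable {𝕜 : Type*} [Field 𝕜] {φ : 𝕜 → 𝕜} {p x y : 𝕜}

lemma slope_comp_self_of_isFixedPt (hp : Function.IsFixedPt φ p) (x : 𝕜) :
    slope (φ ∘ φ) p x = slope φ p (φ x) * slope φ p x := by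
  by_cases hx : φ x = p
  · simp [slope_def_field, hx, hp.eq]
  · have hxp : x - p ≠ 0 := sub_ne_zero.2 fun h => hx (h ▸ hp.eq)
    have hφxp : φ x - p ≠ 0 := sub_ne_zero.2 hx
    simp only [slope_def_field, Function.comp_apply, hp.eq]
    field_simp

variable [LinearOrder 𝕜] [IsStrictOrderedRing 𝕜] {s : Set 𝕜}

/-- Both factors in `slope_comp_self_of_isFixedPt` are nonnegative and antitone in `x`, so their
product can only take the same nonzero value at `x` and `y` if each factor does. -/
lemma ConcaveOn.slope_eq_of_slope_comp_self_eq (hconc : ConcaveOn 𝕜 s φ)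
    (hmono : MonotoneOn φ s) (hmaps : MapsTo φ s s) (hps : p ∈ s) (hp : Function.IsFixedPt φ p)
    (hx : x ∈ s) (hy : y ∈ s) (hxy : slope (φ ∘ φ) p x = slope (φ ∘ φ) p y)
    (hne : slope (φ ∘ φ) p x ≠ 0) : slope φ p x = slope φ p y := by
  wlog hle : x ≤ y generalizing x y
  · exact (this hy hx hxy.symm (hxy ▸ hne) (le_of_not_ge hle)).symm
  simp only [slope_comp_self_of_isFixedPt hp] at hxy hne
  have hne' := hxy ▸ hne
  have hanti := hconc.slope_anti hps
  have mem {z : 𝕜} (hz : z ∈ s) (hzp : slope φ p z ≠ 0) : z ∈ s \ {p} :=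
    ⟨hz, fun h => hzp (by simp [show z = p from h])⟩
  have hx' := mem hx (right_ne_zero_of_mul hne)
  have hy' := mem hy (right_ne_zero_of_mul hne')
  have hφx' := mem (hmaps hx) (left_ne_zero_of_mul hne)
  have hφy' := mem (hmaps hy) (left_ne_zero_of_mul hne')
  have hpos {z : 𝕜} (hz : z ∈ s \ {p}) (hzp : slope φ p z ≠ 0) : 0 < slope φ p z :=
    (hmono.slope_nonneg hps hz.1).lt_of_ne' hzp
  refine ((mul_eq_mul_iff_eq_and_eq_of_pos (hanti hφx' hφy' (hmono hx hy hle))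
    (hanti hx' hy' hle) (hpos hφy' (left_ne_zero_of_mul hne'))
    (hpos hx' (right_ne_zero_of_mul hne))).1 hxy.symm).2.symm

lemma ConcaveOn.slope_comp_self_eq_sq (hconc : ConcaveOn 𝕜 s φ) (hmono : MonotoneOn φ s)
    (hmaps : MapsTo φ s s) (hps : p ∈ s) (hp : Function.IsFixedPt φ p) (hx : x ∈ s)
    (hxφx : slope (φ ∘ φ) p x = slope (φ ∘ φ) p (φ x)) (hne : slope (φ ∘ φ) p x ≠ 0) :
    slope (φ ∘ φ) p x = slope φ p x ^ 2 := by
  rw [slope_comp_self_of_isFixedPt hp,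
    ← hconc.slope_eq_of_slope_comp_self_eq hmono hmaps hps hp hx (hmaps hx) hxφx hne, sq]

end SlopeAtFixedPoint

namespace IsConcaveDistortion

variable {φ : ℝ → ℝ} {a c : ℝ}

lemma mapsTo (hφ : IsConcaveDistortion φ) : MapsTo φ (Icc 0 1) (Icc 0 1) := fun _ hx =>
  ⟨hφ.2.2.1 ▸ hφ.1 (left_mem_Icc.2 zero_le_one) hx hx.1,
    hφ.2.2.2 ▸ hφ.1 hx (right_mem_Icc.2 zero_le_one) hx.2⟩

lemma self_le (hφ : IsConcaveDistortion φ) {x : ℝ} (hx : x ∈ Icc 0 1) : x ≤ φ x := by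
  simpa [hφ.2.2.1, hφ.2.2.2] using
    hφ.2.1.2 (left_mem_Icc.2 zero_le_one) (right_mem_Icc.2 zero_le_one)
      (sub_nonneg.2 hx.2) hx.1 (sub_add_cancel 1 x)

lemma sq_apply_eq_of_slope_comp_self_eqOn_Ioc (hφ : IsConcaveDistortion φ) (ha : 0 < a)
    (ha1 : a ≤ 1) (hc : c ≠ 0) (h : ∀ x ∈ Ioc 0 a, slope (φ ∘ φ) 0 x = c) :
    φ a ^ 2 = c * a ^ 2 := by
  have hI0 : (0 : ℝ) ∈ Icc (0 : ℝ) 1 := left_mem_Icc.2 zero_le_one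
  have haI : a ∈ Icc (0 : ℝ) 1 := ⟨ha.le, ha1⟩
  have hslope {x : ℝ} (hx : 0 < x) : slope φ 0 x = φ x / x := by
    rw [slope_def_field, hφ.2.2.1, sub_zero, sub_zero]
  -- `φ` has constant slope `k` on `(0, a]`, and `a / k` lies there and is sent to `a`
  set k := φ a / a with hk_def
  have hk : 1 ≤ k := (one_le_div ha).2 (hφ.self_le haI)
  have hz : a / k ∈ Ioc 0 a := ⟨by positivity, div_le_self ha.le hk⟩
  have hzI : a / k ∈ Icc (0 : ℝ) 1 := ⟨hz.1.le, hz.2.trans ha1⟩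
  have hkz : slope φ 0 (a / k) = k :=
    (hφ.2.1.slope_eq_of_slope_comp_self_eq hφ.1 hφ.mapsTo hI0 hφ.2.2.1 hzI haI
      (by rw [h _ hz, h _ ⟨ha, le_rfl⟩]) (by rw [h _ hz]; exact hc)).trans (hslope ha)
  have hφz : φ (a / k) = a := by
    rw [hslope hz.1, div_eq_iff hz.1.ne'] at hkz
    rw [hkz]
    field_simp
  have hsq : c = k ^ 2 := by
    rw [← h _ hz]
    exact (hφ.2.1.slope_comp_self_eq_sq hφ.1 hφ.mapsTo hI0 hφ.2.2.1 hzI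
      (by rw [hφz, h _ hz, h _ ⟨ha, le_rfl⟩]) (by rw [h _ hz]; exact hc)).trans (by rw [hkz])
  rw [hsq, hk_def]
  field_simp

lemma sq_one_sub_apply_eq_of_slope_comp_self_eqOn_Ico (hφ : IsConcaveDistortion φ) (ha : 0 ≤ a)
    (ha1 : a < 1) (hc : c ≠ 0) (h : ∀ x ∈ Ico a 1, slope (φ ∘ φ) 1 x = c) :
    (1 - φ a) ^ 2 = c * (1 - a) ^ 2 := by
  have hI1 : (1 : ℝ) ∈ Icc (0 : ℝ) 1 := right_mem_Icc.2 zero_le_one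
  have haI : a ∈ Icc (0 : ℝ) 1 := ⟨ha, ha1.le⟩
  have hca : slope (φ ∘ φ) 1 a = c := h a ⟨le_rfl, ha1⟩
  have hφa : φ a ∈ Ico a 1 := by
    refine ⟨hφ.self_le haI, (hφ.mapsTo haI).2.lt_of_ne fun h1 => hc ?_⟩
    simp [← hca, slope_def_field, h1, hφ.2.2.2]
  have hsq : c = slope φ 1 a ^ 2 := by
    rw [← hca]
    exact hφ.2.1.slope_comp_self_eq_sq hφ.1 hφ.mapsTo hI1 hφ.2.2.2 haI
      (by rw [hca, h _ hφa]) (by rw [hca]; exact hc)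
  rw [hsq, slope_comm, slope_def_field, hφ.2.2.2]
  field_simp [(sub_pos.2 ha1).ne']

end IsConcaveDistortion

noncomputable def kinkDistortion (a b x : ℝ) : ℝ :=
  if x ≤ a then b / a * x else b + (1 - b) / (1 - a) * (x - a)

section kinkDistortion

variable {a b x : ℝ}

lemma slope_kinkDistortion_zero (ha : 0 < a) (hx : x ∈ Ioc 0 a) :
    slope (kinkDistortion a b) 0 x = b / a := by
  simp only [slope_def_field, kinkDistortion, if_pos hx.2, if_pos ha.le]
  field_simp [hx.1.ne']

lemma slope_kinkDistortion_one (ha₀ : a ≠ 0) (ha : a < 1) (hx : x ∈ Ico a 1) :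
    slope (kinkDistortion a b) 1 x = (1 - b) / (1 - a) := by
  have h1a : (1 : ℝ) - a ≠ 0 := sub_ne_zero.2 ha.ne'
  have h1x : x - 1 ≠ 0 := sub_ne_zero.2 hx.2.ne
  simp only [slope_def_field, kinkDistortion, if_neg ha.not_ge]
  split_ifs with hxa
  · obtain rfl := le_antisymm hxa hx.1
    field_simp
    ring
  · field_simp
    ring

end kinkDistortion

lemma eq_of_sq_eq_mul_of_sq_one_sub_eq_mul {a b u : ℝ} (h₀ : u ^ 2 = a * b)
    (h₁ : (1 - u) ^ 2 = (1 - a) * (1 - b)) : a = b := by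
  have : (a - b) ^ 2 = 0 := by linear_combination (4 - a - b - 2 * u) * h₀ + (a + b + 2 * u) * h₁
  exact sub_eq_zero.1 (pow_eq_zero_iff two_ne_zero |>.1 this)

/-- Example L2: for `0 < a < b < 1`, there is no concave distortion
semigroup passing at time 1 through the piecewise linear concave distortion with
`Ψ(x) = (b/a)·x` on `[0,a]` and `Ψ(x) = b + ((1-b)/(1-a))·(x-a)` on `[a,1]`. -/
theorem stmt_13 (a b : ℝ) (ha : 0 < a) (hab : a < b) (hb : b < 1) :
    ¬ ∃ Ψt : ℝ → ℝ → ℝ, IsConcaveDistortionSemigroup Ψt ∧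
        ∀ x ∈ Set.Icc (0:ℝ) 1,
          Ψt 1 x = if x ≤ a then (b / a) * x
                   else b + ((1 - b) / (1 - a)) * (x - a) := by
  rintro ⟨Ψt, ⟨hdist, hsemi⟩, hform⟩
  have ha1 : a < 1 := hab.trans hb
  have hφ := hdist (1 / 2) (by norm_num)
  have hcomp : ∀ x ∈ Icc (0 : ℝ) 1, (Ψt (1 / 2) ∘ Ψt (1 / 2)) x = kinkDistortion a b x :=
    fun x hx => by
      rw [Function.comp_apply, hsemi _ _ (by norm_num) (by norm_num) x hx, add_halves]
      exact hform x hx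
  have hslope {p x : ℝ} (hp : p ∈ Icc (0 : ℝ) 1) (hx : x ∈ Icc (0 : ℝ) 1) :
      slope (Ψt (1 / 2) ∘ Ψt (1 / 2)) p x = slope (kinkDistortion a b) p x := by
    rw [slope_def_field, slope_def_field, hcomp x hx, hcomp p hp]
  have h₀ := hφ.sq_apply_eq_of_slope_comp_self_eqOn_Ioc ha ha1.le
    (div_pos (ha.trans hab) ha).ne' fun x hx => by
      rw [hslope (left_mem_Icc.2 zero_le_one) ⟨hx.1.le, hx.2.trans ha1.le⟩,
        slope_kinkDistortion_zero ha hx]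
  have h₁ := hφ.sq_one_sub_apply_eq_of_slope_comp_self_eqOn_Ico ha.le ha1
    (div_pos (sub_pos.2 hb) (sub_pos.2 ha1)).ne' fun x hx => by
      rw [hslope (right_mem_Icc.2 zero_le_one) ⟨ha.le.trans hx.1, hx.2.le⟩,
        slope_kinkDistortion_one ha.ne' ha1 hx]
  refine hab.ne (eq_of_sq_eq_mul_of_sq_one_sub_eq_mul (u := Ψt (1 / 2) a) ?_ ?_)
  · rw [h₀]
    field_simp
  · rw [h₁]
    field_simp [(sub_pos.2 ha1).ne']
end

section
/- Let Φ denote the cumulative distribution function of the standard normal distribution (Φ(y) = ∫_{−∞}^y (1/√(2π))e^{−s²/2} ds), which is a strictly increasing continuous bijection from ℝ onto (0,1), with inverse Φ^{−1}:(0,1)→ℝ. Define, for t≥0, Ψ_t(x) = Φ(Φ^{−1}(x) + t) for x∈(0,1), Ψ_t(0)=0 and Ψ_t(1)=1 (the Wang transform). Then (Ψ_t)_{t≥0} is a concave distortion semigroup (in particular, each Ψ_t is concave on [0,1]), and for every x∈(0,1) one has lim_{t↓0}(Ψ_t(x)−x)/t = (1/√(2π))·e^{−(Φ^{−1}(x))²/2};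 that is, its generator is the standard normal density evaluated at Φ^{−1}(x). -/
/-!
`Φ` is a smooth increasing bijection `ℝ → (0,1)` with derivative the normal density `φ`, and on
`(0,1)` the Wang transform `Ψ_t = Φ ∘ (· + t) ∘ Φ⁻¹` is conjugate to a translation. This gives the
semigroup law, and the generator `φ(Φ⁻¹ x)` is the derivative of `Φ` at `Φ⁻¹ x`. By the inverse
function rule `Ψ_t'(x) = φ(y + t) / φ(y) = exp(-t y - t² / 2)` with `y = Φ⁻¹ x`; since `Φ⁻¹` is
increasing this derivative is antitone for `t ≥ 0` (log-concavity of `φ`), so `Ψ_t` is concave;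
continuity at the endpoints `0, 1` holds because `Ψ_t` maps `[0,1]` monotonically onto itself.
-/

open Set MeasureTheory Filter Topology

/-- The standard normal cumulative distribution function
`Φ(y) = ∫_{-∞}^y (1/√(2π)) e^{-s²/2} ds`. -/
noncomputable def stdNormalCDF (y : ℝ) : ℝ :=
  ∫ s in Set.Iic y, (Real.sqrt (2 * Real.pi))⁻¹ * Real.exp (-s ^ 2 / 2)

/-- The inverse of the standard normal CDF, `Φ⁻¹ : (0,1) → ℝ`
(`Φ` is a strictly increasing continuous bijection of `ℝ` onto `(0,1)`). -/
noncomputable def stdNormalCDFInv : ℝ → ℝ :=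
  Function.invFun stdNormalCDF

/-- The Wang transform: `Ψ_t(x) = Φ(Φ⁻¹(x) + t)` for `x ∈ (0,1)`,
`Ψ_t(0) = 0`, `Ψ_t(1) = 1`. -/
noncomputable def wang (t x : ℝ) : ℝ :=
  if x = 0 then 0 else if x = 1 then 1 else stdNormalCDF (stdNormalCDFInv x + t)

open ProbabilityTheory Real

theorem continuousOn_Icc_of_monotoneOn_of_surjOn {α β : Type*} [LinearOrder α]
    [TopologicalSpace α] [OrderTopology α] [LinearOrder β] [TopologicalSpace β] [OrderTopology β]
    [DenselyOrdered β] {f : α → β} {a b : α} {c d : β} (hf : MonotoneOn f (Icc a b))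
    (hmaps : MapsTo f (Icc a b) (Icc c d)) (hsurj : SurjOn f (Icc a b) (Icc c d)) :
    ContinuousOn f (Icc a b) := by
  rw [continuousOn_iff_continuous_domRestrict]
  have hmono : Monotone (hmaps.restrict f _ _) := fun x y hxy => hf x.2 y.2 hxy
  have hsurj' : Function.Surjective (hmaps.restrict f _ _) := fun z => by
    obtain ⟨x, hx, hfx⟩ := hsurj z.2
    exact ⟨⟨x, hx⟩, Subtype.ext hfx⟩
  exact continuous_subtype_val.comp (hmono.continuous_of_surjective hsurj')

lemma gaussianPDFReal_zero_one (y : ℝ) :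
    gaussianPDFReal 0 1 y = (√(2 * π))⁻¹ * exp (-y ^ 2 / 2) := by
  simp [gaussianPDFReal]

lemma stdNormalCDF_eq_setIntegral (y : ℝ) :
    stdNormalCDF y = ∫ s in Iic y, gaussianPDFReal 0 1 s := by
  simp only [stdNormalCDF, gaussianPDFReal_zero_one]

lemma stdNormalCDF_sub (a b : ℝ) :
    stdNormalCDF b - stdNormalCDF a = ∫ s in a..b, gaussianPDFReal 0 1 s := by
  rw [stdNormalCDF_eq_setIntegral, stdNormalCDF_eq_setIntegral]
  exact intervalIntegral.integral_Iic_sub_Iic (integrable_gaussianPDFReal 0 1).integrableOn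
    (integrable_gaussianPDFReal 0 1).integrableOn

lemma hasDerivAt_stdNormalCDF (y : ℝ) : HasDerivAt stdNormalCDF (gaussianPDFReal 0 1 y) y := by
  have hcont : Continuous (gaussianPDFReal 0 1) := by
    rw [gaussianPDFReal_def]
    fun_prop
  have hFTC : HasDerivAt (fun u => ∫ s in (0 : ℝ)..u, gaussianPDFReal 0 1 s)
      (gaussianPDFReal 0 1 y) y :=
    intervalIntegral.integral_hasDerivAt_right (hcont.intervalIntegrable _ _)
      hcont.stronglyMeasurable.stronglyMeasurableAtFilter hcont.continuousAt
  have hΦ : stdNormalCDF = fun u => stdNormalCDF 0 + ∫ s in (0 : ℝ)..u, gaussianPDFReal 0 1 s := by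
    funext u
    rw [← stdNormalCDF_sub]
    ring
  rw [hΦ]
  exact hFTC.const_add _

lemma continuous_stdNormalCDF : Continuous stdNormalCDF :=
  continuous_iff_continuousAt.2 fun y => (hasDerivAt_stdNormalCDF y).continuousAt

lemma strictMono_stdNormalCDF : StrictMono stdNormalCDF :=
  strictMono_of_deriv_pos fun y => by
    rw [(hasDerivAt_stdNormalCDF y).deriv]
    exact gaussianPDFReal_pos 0 1 y one_ne_zero

lemma tendsto_stdNormalCDF_atTop : Tendsto stdNormalCDF atTop (𝓝 1) := by
  have h := tendsto_setIntegral_of_monotone (μ := volume) (f := gaussianPDFReal 0 1)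
    (fun y => measurableSet_Iic) monotone_Iic (integrable_gaussianPDFReal 0 1).integrableOn
  rw [iUnion_Iic, Measure.restrict_univ, integral_gaussianPDFReal_eq_one 0 one_ne_zero] at h
  rwa [funext stdNormalCDF_eq_setIntegral]

lemma tendsto_stdNormalCDF_atBot : Tendsto stdNormalCDF atBot (𝓝 0) := by
  have h := tendsto_setIntegral_of_antitone (μ := volume) (f := gaussianPDFReal 0 1)
    (s := fun y : ℝ => Iic (-y)) (fun y => measurableSet_Iic)
    (fun y z hyz => Iic_subset_Iic.2 (neg_le_neg hyz))
    ⟨0, (integrable_gaussianPDFReal 0 1).integrableOn⟩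
  rw [iInter_eq_empty_iff.2 fun y => ⟨-y + 1, by simp⟩, Measure.restrict_empty,
    integral_zero_measure] at h
  rw [funext stdNormalCDF_eq_setIntegral]
  simpa only [Function.comp_def, neg_neg] using h.comp tendsto_neg_atBot_atTop

lemma range_stdNormalCDF : range stdNormalCDF = Ioo 0 1 := by
  apply Subset.antisymm
  · rintro _ ⟨y, rfl⟩
    exact ⟨(strictMono_stdNormalCDF.monotone.le_of_tendsto tendsto_stdNormalCDF_atBot (y - 1)).trans_lt
        (strictMono_stdNormalCDF (sub_one_lt y)),
      (strictMono_stdNormalCDF (lt_add_one y)).trans_le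
        (strictMono_stdNormalCDF.monotone.ge_of_tendsto tendsto_stdNormalCDF_atTop (y + 1))⟩
  · intro x hx
    exact mem_range_of_exists_le_of_exists_ge continuous_stdNormalCDF
      (tendsto_stdNormalCDF_atBot.eventually_le_const hx.1).exists
      (tendsto_stdNormalCDF_atTop.eventually_const_le hx.2).exists

lemma stdNormalCDFInv_stdNormalCDF (y : ℝ) : stdNormalCDFInv (stdNormalCDF y) = y :=
  Function.leftInverse_invFun strictMono_stdNormalCDF.injective y

lemma stdNormalCDF_stdNormalCDFInv {x : ℝ} (hx : x ∈ Ioo 0 1) :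
    stdNormalCDF (stdNormalCDFInv x) = x :=
  Function.invFun_eq (by rwa [← mem_range, range_stdNormalCDF])

lemma strictMonoOn_stdNormalCDFInv : StrictMonoOn stdNormalCDFInv (Ioo 0 1) := fun a ha b hb hab => by
  rwa [← strictMono_stdNormalCDF.lt_iff_lt, stdNormalCDF_stdNormalCDFInv ha,
    stdNormalCDF_stdNormalCDFInv hb]

lemma hasDerivAt_stdNormalCDFInv {x : ℝ} (hx : x ∈ Ioo 0 1) :
    HasDerivAt stdNormalCDFInv (gaussianPDFReal 0 1 (stdNormalCDFInv x))⁻¹ x := by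
  have himage : stdNormalCDFInv '' Ioo 0 1 = univ := eq_univ_of_forall fun y =>
    ⟨stdNormalCDF y, range_stdNormalCDF ▸ mem_range_self y, stdNormalCDFInv_stdNormalCDF y⟩
  have hcont : ContinuousAt stdNormalCDFInv x :=
    continuousAt_of_monotoneOn_of_image_mem_nhds strictMonoOn_stdNormalCDFInv.monotoneOn
      (isOpen_Ioo.mem_nhds hx) (himage ▸ univ_mem)
  exact (hasDerivAt_stdNormalCDF _).of_local_left_inverse hcont
    (gaussianPDFReal_pos 0 1 _ one_ne_zero).ne'
    (eventually_of_mem (isOpen_Ioo.mem_nhds hx) fun z hz => stdNormalCDF_stdNormalCDFInv hz)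

lemma wang_of_mem_Ioo (t : ℝ) {x : ℝ} (hx : x ∈ Ioo 0 1) :
    wang t x = stdNormalCDF (stdNormalCDFInv x + t) := by
  rw [wang, if_neg hx.1.ne', if_neg hx.2.ne]

@[simp] lemma wang_apply_zero (t : ℝ) : wang t 0 = 0 := by simp [wang]

@[simp] lemma wang_apply_one (t : ℝ) : wang t 1 = 1 := by simp [wang]

lemma wang_mem_Ioo (t : ℝ) {x : ℝ} (hx : x ∈ Ioo 0 1) : wang t x ∈ Ioo 0 1 := by
  rw [wang_of_mem_Ioo t hx, ← range_stdNormalCDF]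
  exact mem_range_self _

lemma wang_add (s t : ℝ) {x : ℝ} (hx : x ∈ Icc 0 1) : wang s (wang t x) = wang (s + t) x := by
  rcases eq_endpoints_or_mem_Ioo_of_mem_Icc hx with rfl | rfl | hx
  · simp
  · simp
  rw [wang_of_mem_Ioo s (wang_mem_Ioo t hx), wang_of_mem_Ioo t hx, wang_of_mem_Ioo _ hx,
    stdNormalCDFInv_stdNormalCDF, add_assoc, add_comm t]

lemma wang_pos (t : ℝ) {x : ℝ} (hx₀ : 0 < x) (hx₁ : x ≤ 1) : 0 < wang t x := by
  rcases hx₁.eq_or_lt with rfl | hx₁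
  · simp
  · exact (wang_mem_Ioo t ⟨hx₀, hx₁⟩).1

lemma wang_lt_one (t : ℝ) {x : ℝ} (hx₀ : 0 ≤ x) (hx₁ : x < 1) : wang t x < 1 := by
  rcases hx₀.eq_or_lt with rfl | hx₀
  · simp
  · exact (wang_mem_Ioo t ⟨hx₀, hx₁⟩).2

lemma strictMonoOn_wang (t : ℝ) : StrictMonoOn (wang t) (Icc 0 1) := by
  intro a ha b hb hab
  rcases ha.1.eq_or_lt with rfl | ha₀
  · simpa using wang_pos t hab hb.2
  rcases hb.2.eq_or_lt with rfl | hb₁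
  · simpa using wang_lt_one t ha.1 hab
  rw [wang_of_mem_Ioo t ⟨ha₀, hab.trans hb₁⟩, wang_of_mem_Ioo t ⟨ha₀.trans hab, hb₁⟩]
  exact strictMono_stdNormalCDF (add_lt_add_left (strictMonoOn_stdNormalCDFInv
    ⟨ha₀, hab.trans hb₁⟩ ⟨ha₀.trans hab, hb₁⟩ hab) t)

lemma wang_zero {x : ℝ} (hx : x ∈ Icc 0 1) : wang 0 x = x := by
  rcases eq_endpoints_or_mem_Ioo_of_mem_Icc hx with rfl | rfl | hx
  · simp
  · simp
  rw [wang_of_mem_Ioo 0 hx, add_zero, stdNormalCDF_stdNormalCDFInv hx]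

lemma mapsTo_wang (t : ℝ) : MapsTo (wang t) (Icc 0 1) (Icc 0 1) := fun x hx => by
  have hmono := (strictMonoOn_wang t).monotoneOn
  simpa using And.intro (hmono (left_mem_Icc.2 zero_le_one) hx hx.1)
    (hmono hx (right_mem_Icc.2 zero_le_one) hx.2)

lemma surjOn_wang (t : ℝ) : SurjOn (wang t) (Icc 0 1) (Icc 0 1) := fun z hz =>
  ⟨wang (-t) z, mapsTo_wang (-t) hz, by rw [wang_add t (-t) hz, add_neg_cancel, wang_zero hz]⟩

lemma continuousOn_wang (t : ℝ) : ContinuousOn (wang t) (Icc 0 1) :=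
  continuousOn_Icc_of_monotoneOn_of_surjOn (strictMonoOn_wang t).monotoneOn (mapsTo_wang t)
    (surjOn_wang t)

lemma gaussianPDFReal_add_mul_inv (y t : ℝ) :
    gaussianPDFReal 0 1 (y + t) * (gaussianPDFReal 0 1 y)⁻¹ = exp (-(t * y) - t ^ 2 / 2) := by
  rw [gaussianPDFReal_zero_one, gaussianPDFReal_zero_one, mul_inv, inv_inv,
    mul_mul_mul_comm, inv_mul_cancel₀ (by positivity), one_mul, ← exp_neg, ← exp_add]
  ring_nf

lemma hasDerivAt_wang (t : ℝ) {x : ℝ} (hx : x ∈ Ioo 0 1) :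
    HasDerivAt (wang t) (exp (-(t * stdNormalCDFInv x) - t ^ 2 / 2)) x := by
  rw [← gaussianPDFReal_add_mul_inv]
  have hshift := (hasDerivAt_stdNormalCDF (stdNormalCDFInv x + t)).comp_add_const _ t
  refine (hshift.comp x (hasDerivAt_stdNormalCDFInv hx)).congr_of_eventuallyEq ?_
  exact eventually_of_mem (isOpen_Ioo.mem_nhds hx) fun z hz => wang_of_mem_Ioo t hz

lemma concaveOn_wang {t : ℝ} (ht : 0 ≤ t) : ConcaveOn ℝ (Icc 0 1) (wang t) := by
  refine AntitoneOn.concaveOn_of_deriv (convex_Icc 0 1) (continuousOn_wang t) ?_ ?_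
  · rw [interior_Icc]
    exact fun x hx => (hasDerivAt_wang t hx).differentiableAt.differentiableWithinAt
  · rw [interior_Icc]
    intro a ha b hb hab
    rw [(hasDerivAt_wang t ha).deriv, (hasDerivAt_wang t hb).deriv]
    gcongr
    exact strictMonoOn_stdNormalCDFInv.monotoneOn ha hb hab

lemma isConcaveDistortionSemigroup_wang : IsConcaveDistortionSemigroup wang :=
  ⟨fun t ht => ⟨(strictMonoOn_wang t).monotoneOn, concaveOn_wang ht, wang_apply_zero t,
    wang_apply_one t⟩, fun s t _ _ _ hx => wang_add s t hx⟩

lemma tendsto_wang_sub_div {x : ℝ} (hx : x ∈ Ioo 0 1) :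
    Tendsto (fun t => (wang t x - x) / t) (𝓝[>] 0)
      (𝓝 (gaussianPDFReal 0 1 (stdNormalCDFInv x))) := by
  have h := (hasDerivAt_stdNormalCDF (stdNormalCDFInv x)).tendsto_slope_zero_right
  refine h.congr fun t => ?_
  rw [stdNormalCDF_stdNormalCDFInv hx, ← wang_of_mem_Ioo t hx, smul_eq_mul, inv_mul_eq_div]

/-- the Wang transform is a concave distortion semigroup (in
particular each `Ψ_t` is concave on `[0,1]`) with generator
`G(x) = (1/√(2π)) e^{-(Φ⁻¹(x))²/2}`, the standard normal density at `Φ⁻¹(x)`. -/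
theorem stmt_17 :
    IsConcaveDistortionSemigroup wang ∧
    ∀ x ∈ Set.Ioo (0:ℝ) 1,
      Filter.Tendsto (fun t => (wang t x - x) / t)
        (nhdsWithin 0 (Set.Ioi 0))
        (nhds ((Real.sqrt (2 * Real.pi))⁻¹ *
          Real.exp (-(stdNormalCDFInv x) ^ 2 / 2))) :=
  ⟨isConcaveDistortionSemigroup_wang, fun x hx => by
    simpa only [gaussianPDFReal_zero_one] using tendsto_wang_sub_div hx⟩
end

section
/- Let G:(0,1)→(0,∞) be a concave function and let (Ψ_t)_{t≥0} be the associated family, i.e. Ψ_t(0)=0 and, for x∈(0,1], Ψ_t(x)=inf{y∈[x,1] : ∫_x^y 1/G(s) ds = t} (inf ∅ = 1). For t≥0 define Ψ_t^{−1}(x) := inf{y∈[0,1] : Ψ_t(y) > x} (with inf ∅ = 1), and define the dual family Ψ̃_t(x) := 1 − Ψ_t^{−1}(1−x) for x∈[0,1]. Then (Ψ̃_t)_{t≥0} is a concave distortion semigroup and, for every x∈(0,1), its generator satisfies lim_{t↓0}(Ψ̃_t(x)−x)/t = G(1−x). -/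
/-! `Ψ_t(x)` is the position at time `t` of the solution of `y' = G(y)` started at `x`, frozen at
`1` once it gets there: with `F_x(z) = ∫_x^z 1/G`, one has `Ψ_t(x) ≤ z ↔ t ≤ F_x(z)` for
`x ≤ z < 1`. Since `F_y(z)` is also the time the flow of `G(1-·)` needs from `1-z` to `1-y`,
this relation is symmetric under `x ↦ 1-x`, and it identifies the dual family with the family
associated with `G(1-·)`. So it is enough to study associated families: the semigroup law is the
additivity of `F`, the generator is the derivative of the inverse of `F_x`, and concavity of `Ψ_t`
is an ODE comparison: `γ(σ) = lΨ_σ(a) + mΨ_σ(b)` satisfies `γ' ≤ G(γ)` by concavity of `G`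
(extended by `0` at the endpoints), hence stays below the solution `Ψ_σ(la + mb)`. -/

open Set MeasureTheory Filter Topology

/-- The generalized inverse `Ψ⁻¹(x) = inf {y ∈ [0,1] : Ψ(y) > x}` with the
convention `inf ∅ = 1` (realized by adding `1` to the set, which does not change
the infimum when the set is nonempty since all its elements lie in `[0,1]`). -/
noncomputable def distortionInv (Ψ : ℝ → ℝ) (x : ℝ) : ℝ :=
  sInf ({y | y ∈ Set.Icc (0:ℝ) 1 ∧ x < Ψ y} ∪ {1})


lemma le_of_hasDerivAt_nonpos_off_point {v v' : ℝ → ℝ} {p q τ : ℝ} (hpq : p ≤ q)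
    (hv : ContinuousOn v (Icc p q)) (hv' : ∀ σ ∈ Ioo p q, σ ≠ τ → HasDerivAt v (v' σ) σ)
    (hv'0 : ∀ σ ∈ Ioo p q, σ ≠ τ → v' σ ≤ 0) : v q ≤ v p := by
  have key : ∀ a b, p ≤ a → a ≤ b → b ≤ q → τ ∉ Ioo a b → v b ≤ v a := by
    intro a b hpa hab hbq hτ
    have hsub : Ioo a b ⊆ Ioo p q := Ioo_subset_Ioo hpa hbq
    have hne : ∀ σ ∈ Ioo a b, σ ≠ τ := fun σ hσ h => hτ (h ▸ hσ)
    refine antitoneOn_of_hasDerivWithinAt_nonpos (convex_Icc a b)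
      (hv.mono (Icc_subset_Icc hpa hbq)) (f' := v') ?_ ?_ (left_mem_Icc.2 hab)
      (right_mem_Icc.2 hab) hab <;> rw [interior_Icc]
    · exact fun σ hσ => (hv' σ (hsub hσ) (hne σ hσ)).hasDerivWithinAt
    · exact fun σ hσ => hv'0 σ (hsub hσ) (hne σ hσ)
  by_cases hτ : τ ∈ Ioo p q
  · exact (key τ q hτ.1.le hτ.2.le le_rfl fun h => lt_irrefl _ h.1).trans
      (key p τ le_rfl hτ.1.le hτ.2.le fun h => lt_irrefl _ h.2)
  · exact key p q le_rfl hpq le_rfl hτ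

noncomputable def flowTime (G : ℝ → ℝ) (x y : ℝ) : ℝ :=
  ∫ s in x..y, (G s)⁻¹

structure IsFlowSpeed (G : ℝ → ℝ) : Prop where
  continuousOn : ContinuousOn G (Ioo 0 1)
  pos : ∀ x ∈ Ioo (0:ℝ) 1, 0 < G x

variable {G : ℝ → ℝ}

lemma flowTime_self (G : ℝ → ℝ) (x : ℝ) : flowTime G x x = 0 :=
  intervalIntegral.integral_same

lemma flowTime_comp_one_sub (G : ℝ → ℝ) (x y : ℝ) :
    flowTime (fun s => G (1 - s)) x y = flowTime G (1 - y) (1 - x) :=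
  intervalIntegral.integral_comp_sub_left (fun u => (G u)⁻¹) 1

lemma assocPsi_apply_zero (G : ℝ → ℝ) (t : ℝ) : assocPsi G t 0 = 0 :=
  if_pos rfl

lemma assocPsi_mem_Icc (G : ℝ → ℝ) (t : ℝ) {x : ℝ} (hx : x ∈ Icc (0:ℝ) 1) :
    assocPsi G t x ∈ Icc x 1 := by
  rcases hx.1.eq_or_lt with rfl | hx0
  · simp [assocPsi_apply_zero]
  rw [assocPsi, if_neg hx0.ne']
  refine ⟨le_csInf ⟨1, Or.inr rfl⟩ ?_, csInf_le ⟨x, ?_⟩ (Or.inr rfl)⟩ <;>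
    rintro y (⟨hy, -⟩ | rfl)
  exacts [hy.1, hx.2, hy.1, hx.2]

lemma assocPsi_apply_one (G : ℝ → ℝ) (t : ℝ) : assocPsi G t 1 = 1 :=
  have h := assocPsi_mem_Icc G t (right_mem_Icc.2 zero_le_one)
  le_antisymm h.2 h.1

lemma mapsTo_assocPsi (G : ℝ → ℝ) (t : ℝ) : MapsTo (assocPsi G t) (Icc 0 1) (Icc 0 1) :=
  fun _ hx => Icc_subset_Icc_left hx.1 (assocPsi_mem_Icc G t hx)

namespace IsFlowSpeed

lemma of_concaveOn (hG : ConcaveOn ℝ (Ioo 0 1) G) (hpos : ∀ x ∈ Ioo (0:ℝ) 1, 0 < G x) :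
    IsFlowSpeed G :=
  ⟨hG.continuousOn isOpen_Ioo, hpos⟩

lemma continuousOn_inv (hG : IsFlowSpeed G) : ContinuousOn (fun s => (G s)⁻¹) (Ioo 0 1) :=
  hG.continuousOn.inv₀ fun x hx => (hG.pos x hx).ne'

lemma intervalIntegrable_inv (hG : IsFlowSpeed G) {x y : ℝ} (hx : x ∈ Ioo (0:ℝ) 1)
    (hy : y ∈ Ioo (0:ℝ) 1) : IntervalIntegrable (fun s => (G s)⁻¹) volume x y :=
  (hG.continuousOn_inv.mono (ordConnected_Ioo.uIcc_subset hx hy)).intervalIntegrable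

lemma flowTime_add (hG : IsFlowSpeed G) {x y z : ℝ} (hx : x ∈ Ioo (0:ℝ) 1)
    (hy : y ∈ Ioo (0:ℝ) 1) (hz : z ∈ Ioo (0:ℝ) 1) :
    flowTime G x y + flowTime G y z = flowTime G x z :=
  intervalIntegral.integral_add_adjacent_intervals (hG.intervalIntegrable_inv hx hy)
    (hG.intervalIntegrable_inv hy hz)

lemma hasDerivAt_flowTime (hG : IsFlowSpeed G) {x y : ℝ} (hx : x ∈ Ioo (0:ℝ) 1)
    (hy : y ∈ Ioo (0:ℝ) 1) : HasDerivAt (flowTime G x) (G y)⁻¹ y :=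
  intervalIntegral.integral_hasDerivAt_right (hG.intervalIntegrable_inv hx hy)
    (hG.continuousOn_inv.stronglyMeasurableAtFilter isOpen_Ioo _ hy)
    (hG.continuousOn_inv.continuousAt (isOpen_Ioo.mem_nhds hy))

lemma continuousOn_flowTime (hG : IsFlowSpeed G) {x : ℝ} (hx : x ∈ Ioo (0:ℝ) 1) :
    ContinuousOn (flowTime G x) (Ioo 0 1) :=
  fun _ hy => (hG.hasDerivAt_flowTime hx hy).continuousAt.continuousWithinAt

lemma strictMonoOn_flowTime (hG : IsFlowSpeed G) {x : ℝ} (hx : x ∈ Ioo (0:ℝ) 1) :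
    StrictMonoOn (flowTime G x) (Ioo 0 1) :=
  strictMonoOn_of_deriv_pos (convex_Ioo 0 1) (hG.continuousOn_flowTime hx) fun y hy => by
    rw [interior_Ioo] at hy
    rw [(hG.hasDerivAt_flowTime hx hy).deriv]
    exact inv_pos.2 (hG.pos y hy)

lemma flowTime_nonneg (hG : IsFlowSpeed G) {x y : ℝ} (hx : x ∈ Ioo (0:ℝ) 1)
    (hy : y ∈ Ioo (0:ℝ) 1) (hxy : x ≤ y) : 0 ≤ flowTime G x y :=
  flowTime_self G x ▸ (hG.strictMonoOn_flowTime hx).monotoneOn hx hy hxy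

lemma assocPsi_eq_of_flowTime_eq (hG : IsFlowSpeed G) {t x y : ℝ} (hx : 0 < x)
    (hy : y ∈ Ico x 1) (hxy : flowTime G x y = t) : assocPsi G t x = y := by
  rw [assocPsi, if_neg hx.ne']
  refine IsLeast.csInf_eq ⟨Or.inl ⟨Ico_subset_Icc_self hy, hxy⟩, ?_⟩
  rintro z (⟨hz, hxz⟩ | rfl)
  · by_contra! hzy
    have hxI : x ∈ Ioo (0:ℝ) 1 := ⟨hx, hy.1.trans_lt hy.2⟩
    exact (hG.strictMonoOn_flowTime hxI ⟨hx.trans_le hz.1, hzy.trans hy.2⟩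
      ⟨hx.trans_le hy.1, hy.2⟩ hzy).ne (hxz.trans hxy.symm)
  · exact hy.2.le

lemma assocPsi_cases (hG : IsFlowSpeed G) {t x : ℝ} (hx : x ∈ Ioc (0:ℝ) 1) (ht : 0 ≤ t) :
    (assocPsi G t x ∈ Ico x 1 ∧ flowTime G x (assocPsi G t x) = t) ∨
      (assocPsi G t x = 1 ∧ ∀ y ∈ Ico x 1, flowTime G x y < t) := by
  by_cases h : ∃ y ∈ Ico x 1, t ≤ flowTime G x y
  · obtain ⟨y, hy, hty⟩ := h
    have hsub : Icc x y ⊆ Ioo 0 1 := Icc_subset_Ioo hx.1 hy.2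
    obtain ⟨z, hz, hxz⟩ := intermediate_value_Icc hy.1
      ((hG.continuousOn_flowTime (hsub (left_mem_Icc.2 hy.1))).mono hsub)
      ⟨(flowTime_self G x).trans_le ht, hty⟩
    have hz' : z ∈ Ico x 1 := ⟨hz.1, hz.2.trans_lt hy.2⟩
    rw [hG.assocPsi_eq_of_flowTime_eq hx.1 hz' hxz]
    exact Or.inl ⟨hz', hxz⟩
  · push Not at h
    refine Or.inr ⟨?_, h⟩
    rw [assocPsi, if_neg hx.1.ne']
    refine IsLeast.csInf_eq ⟨Or.inr rfl, ?_⟩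
    rintro z (⟨hz, hxz⟩ | rfl)
    · by_contra! hz1
      exact (h z ⟨hz.1, hz1⟩).ne hxz
    · exact le_rfl

lemma assocPsi_le_iff (hG : IsFlowSpeed G) {t x z : ℝ} (hx : 0 < x) (hz : z ∈ Ico x 1)
    (ht : 0 ≤ t) : assocPsi G t x ≤ z ↔ t ≤ flowTime G x z := by
  have hxI : x ∈ Ioo (0:ℝ) 1 := ⟨hx, hz.1.trans_lt hz.2⟩
  rcases hG.assocPsi_cases ⟨hx, hxI.2.le⟩ ht with ⟨hy, hxy⟩ | ⟨h1, hlt⟩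
  · rw [← (hG.strictMonoOn_flowTime hxI).le_iff_le ⟨hx.trans_le hy.1, hy.2⟩
      ⟨hx.trans_le hz.1, hz.2⟩, hxy]
  · rw [h1]
    exact iff_of_false hz.2.not_ge (hlt z hz).not_ge

lemma le_assocPsi_iff (hG : IsFlowSpeed G) {t x y : ℝ} (hx : 0 < x) (hy : y ∈ Ico x 1)
    (ht : 0 ≤ t) : y ≤ assocPsi G t x ↔ flowTime G x y ≤ t := by
  have hxI : x ∈ Ioo (0:ℝ) 1 := ⟨hx, hy.1.trans_lt hy.2⟩
  rcases hG.assocPsi_cases ⟨hx, hxI.2.le⟩ ht with ⟨hz, hxz⟩ | ⟨h1, hlt⟩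
  · rw [← (hG.strictMonoOn_flowTime hxI).le_iff_le ⟨hx.trans_le hy.1, hy.2⟩
      ⟨hx.trans_le hz.1, hz.2⟩, hxz]
  · rw [h1]
    exact iff_of_true hy.2.le (hlt y hy).le

lemma assocPsi_zero_apply (hG : IsFlowSpeed G) {x : ℝ} (hx : x ∈ Icc (0:ℝ) 1) :
    assocPsi G 0 x = x := by
  rcases hx.1.eq_or_lt with rfl | hx0
  · exact assocPsi_apply_zero G 0
  rcases hx.2.eq_or_lt with rfl | hx1
  · exact assocPsi_apply_one G 0
  exact hG.assocPsi_eq_of_flowTime_eq hx0 ⟨le_rfl, hx1⟩ (flowTime_self G x)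

lemma monotoneOn_assocPsi (hG : IsFlowSpeed G) {t : ℝ} (ht : 0 ≤ t) :
    MonotoneOn (assocPsi G t) (Icc 0 1) := by
  intro x hx x' hx' hxx'
  rcases hx.1.eq_or_lt with rfl | hx0
  · rw [assocPsi_apply_zero]
    exact (mapsTo_assocPsi G t hx').1
  rcases hG.assocPsi_cases ⟨hx0.trans_le hxx', hx'.2⟩ ht with ⟨hy, hxy⟩ | ⟨h1, -⟩
  · have hx'I : x' ∈ Ioo (0:ℝ) 1 := ⟨hx0.trans_le hxx', hy.1.trans_lt hy.2⟩
    have hxI : x ∈ Ioo (0:ℝ) 1 := ⟨hx0, hxx'.trans_lt hx'I.2⟩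
    rw [hG.assocPsi_le_iff hx0 ⟨hxx'.trans hy.1, hy.2⟩ ht,
      ← hG.flowTime_add hxI hx'I ⟨hx'I.1.trans_le hy.1, hy.2⟩, hxy]
    linarith [hG.flowTime_nonneg hxI hx'I hxx']
  · rw [h1]
    exact (assocPsi_mem_Icc G t hx).2

lemma assocPsi_mono_time (hG : IsFlowSpeed G) {s t x : ℝ} (hx : x ∈ Icc (0:ℝ) 1)
    (hs : 0 ≤ s) (hst : s ≤ t) : assocPsi G s x ≤ assocPsi G t x := by
  rcases hx.1.eq_or_lt with rfl | hx0
  · simp only [assocPsi_apply_zero, le_refl]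
  rcases hG.assocPsi_cases ⟨hx0, hx.2⟩ (hs.trans hst) with ⟨hy, hxy⟩ | ⟨h1, -⟩
  · exact (hG.assocPsi_le_iff hx0 hy hs).2 (hst.trans_eq hxy.symm)
  · rw [h1]
    exact (assocPsi_mem_Icc G s hx).2

lemma assocPsi_assocPsi (hG : IsFlowSpeed G) {s t x : ℝ} (hs : 0 ≤ s) (ht : 0 ≤ t)
    (hx : x ∈ Icc (0:ℝ) 1) : assocPsi G s (assocPsi G t x) = assocPsi G (s + t) x := by
  rcases hx.1.eq_or_lt with rfl | hx0
  · simp only [assocPsi_apply_zero]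
  have hmono : assocPsi G t x ≤ assocPsi G (s + t) x :=
    hG.assocPsi_mono_time hx ht (le_add_of_nonneg_left hs)
  rcases hG.assocPsi_cases ⟨hx0, hx.2⟩ ht with ⟨hy, hxy⟩ | ⟨h1, -⟩
  · set y := assocPsi G t x
    have hxI : x ∈ Ioo (0:ℝ) 1 := ⟨hx0, hy.1.trans_lt hy.2⟩
    have hyI : y ∈ Ioo (0:ℝ) 1 := ⟨hx0.trans_le hy.1, hy.2⟩
    rcases hG.assocPsi_cases ⟨hyI.1, hy.2.le⟩ hs with ⟨hz, hyz⟩ | ⟨h1, hlt⟩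
    · refine (hG.assocPsi_eq_of_flowTime_eq hx0 ⟨hy.1.trans hz.1, hz.2⟩ ?_).symm
      rw [← hG.flowTime_add hxI hyI ⟨hyI.1.trans_le hz.1, hz.2⟩, hxy, hyz, add_comm]
    rcases hG.assocPsi_cases ⟨hx0, hx.2⟩ (add_nonneg hs ht) with ⟨hw, hxw⟩ | ⟨h1', -⟩
    · have := hG.flowTime_add hxI hyI ⟨hyI.1.trans_le hmono, hw.2⟩
      linarith [hlt _ ⟨hmono, hw.2⟩]
    · rw [h1, h1']
  · rw [h1, assocPsi_apply_one]
    exact le_antisymm (h1 ▸ hmono) (assocPsi_mem_Icc G _ hx).2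

lemma continuousOn_assocPsi_time (hG : IsFlowSpeed G) {x : ℝ} (hx : x ∈ Icc (0:ℝ) 1) :
    ContinuousOn (fun t => assocPsi G t x) (Ici 0) := by
  rcases hx.1.eq_or_lt with rfl | hx0
  · simp only [assocPsi_apply_zero]
    exact continuousOn_const
  have hmem := fun t => assocPsi_mem_Icc G t hx
  intro σ hσ
  rw [ContinuousWithinAt, tendsto_order]
  refine ⟨fun z hz => ?_, fun z hz => ?_⟩
  · rcases lt_or_ge z x with hzx | hxz
    · exact Eventually.of_forall fun t => hzx.trans_le (hmem t).1
    have hz' : z ∈ Ico x 1 := ⟨hxz, hz.trans_le (hmem σ).2⟩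
    have hFz : flowTime G x z < σ :=
      not_le.1 fun h => hz.not_ge ((hG.assocPsi_le_iff hx0 hz' hσ).2 h)
    filter_upwards [self_mem_nhdsWithin, nhdsWithin_le_nhds (Ioi_mem_nhds hFz)] with t ht htz
    exact not_le.1 fun h => (not_le.2 htz) ((hG.assocPsi_le_iff hx0 hz' ht).1 h)
  · rcases lt_or_ge 1 z with h1z | hz1
    · exact Eventually.of_forall fun t => (hmem t).2.trans_lt h1z
    set y := assocPsi G σ x
    have hz' : (y + z) / 2 ∈ Ico x 1 := ⟨by linarith [(hmem σ).1], by linarith⟩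
    have hFz : σ < flowTime G x ((y + z) / 2) :=
      not_le.1 fun h => ((hG.le_assocPsi_iff hx0 hz' hσ).2 h).not_gt (by linarith)
    filter_upwards [self_mem_nhdsWithin, nhdsWithin_le_nhds (Iio_mem_nhds hFz)] with t ht htz
    have := not_le.1 fun h => htz.not_ge ((hG.le_assocPsi_iff hx0 hz' ht).1 h)
    linarith

lemma hasDerivAt_assocPsi_time_of_lt_one (hG : IsFlowSpeed G) {x σ : ℝ}
    (hx : x ∈ Ico (0:ℝ) 1) (hσ : 0 < σ) (h1 : assocPsi G σ x < 1) :
    HasDerivAt (fun t => assocPsi G t x) ((Ioo 0 1).indicator G (assocPsi G σ x)) σ := by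
  rcases hx.1.eq_or_lt with rfl | hx0
  · simp only [assocPsi_apply_zero]
    rw [indicator_of_notMem (show (0:ℝ) ∉ Ioo 0 1 from fun h => lt_irrefl _ h.1)]
    exact hasDerivAt_const σ (0:ℝ)
  have hxI : x ∈ Icc (0:ℝ) 1 := Ico_subset_Icc_self hx
  have hyI : assocPsi G σ x ∈ Ioo (0:ℝ) 1 := ⟨hx0.trans_le (assocPsi_mem_Icc G σ hxI).1, h1⟩
  have hcont : ContinuousAt (fun t => assocPsi G t x) σ :=
    (hG.continuousOn_assocPsi_time hxI).continuousAt (Ici_mem_nhds hσ)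
  have hinv : ∀ᶠ t in 𝓝 σ, flowTime G x (assocPsi G t x) = t := by
    filter_upwards [Ioi_mem_nhds hσ, hcont.eventually (Iio_mem_nhds h1)] with t ht ht1
    rcases hG.assocPsi_cases ⟨hx0, hx.2.le⟩ (le_of_lt ht) with ⟨-, h⟩ | ⟨h, -⟩
    · exact h
    · exact absurd h (mem_Iio.1 ht1).ne
  rw [indicator_of_mem hyI]
  simpa using (hG.hasDerivAt_flowTime ⟨hx0, hx.2⟩ hyI).of_local_left_inverse hcont
    (inv_ne_zero (hG.pos _ hyI).ne') hinv

/-- `τ` is the time at which `t ↦ Ψ_t(x)` reaches `1`. -/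
lemma exists_hasDerivAt_assocPsi_time (hG : IsFlowSpeed G) {x : ℝ} (hx : x ∈ Icc (0:ℝ) 1) :
    ∃ τ, ∀ σ, 0 < σ → σ ≠ τ →
      HasDerivAt (fun t => assocPsi G t x) ((Ioo 0 1).indicator G (assocPsi G σ x)) σ := by
  set T := {s : ℝ | 0 ≤ s ∧ assocPsi G s x = 1}
  refine ⟨sInf T, fun σ hσ hστ => ?_⟩
  rcases (assocPsi_mem_Icc G σ hx).2.lt_or_eq with h1 | h1
  · exact hG.hasDerivAt_assocPsi_time_of_lt_one
      ⟨hx.1, (assocPsi_mem_Icc G σ hx).1.trans_lt h1⟩ hσ h1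
  have hσT : σ ∈ T := ⟨hσ.le, h1⟩
  obtain ⟨σ', hσ', hσ'σ⟩ := exists_lt_of_csInf_lt ⟨σ, hσT⟩
    ((csInf_le ⟨0, fun s hs => hs.1⟩ hσT).lt_of_ne hστ.symm)
  have hconst : (fun t => assocPsi G t x) =ᶠ[𝓝 σ] fun _ => 1 := by
    filter_upwards [Ioi_mem_nhds hσ'σ] with t ht
    exact le_antisymm (assocPsi_mem_Icc G t hx).2
      (hσ'.2 ▸ hG.assocPsi_mono_time hx hσ'.1 (le_of_lt ht))
  rw [h1, indicator_of_notMem (fun h => lt_irrefl _ h.2)]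
  exact (hasDerivAt_const σ 1).congr_of_eventuallyEq hconst

lemma tendsto_slope_assocPsi (hG : IsFlowSpeed G) {x : ℝ} (hx : x ∈ Ioo (0:ℝ) 1) :
    Tendsto (fun t => (assocPsi G t x - x) / t) (𝓝[>] 0) (𝓝 (G x)) := by
  have hx₀ : x / 2 ∈ Ioo (0:ℝ) 1 := ⟨by linarith [hx.1], by linarith [hx.2]⟩
  set s₀ := flowTime G (x / 2) x
  have hs₀ : 0 < s₀ := flowTime_self G (x / 2) ▸
    hG.strictMonoOn_flowTime hx₀ hx₀ hx (by linarith [hx.1])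
  have hΨ : assocPsi G s₀ (x / 2) = x :=
    hG.assocPsi_eq_of_flowTime_eq hx₀.1 ⟨by linarith [hx.1], hx.2⟩ rfl
  have hd := hG.hasDerivAt_assocPsi_time_of_lt_one ⟨hx₀.1.le, hx₀.2⟩ hs₀ (by rw [hΨ]; exact hx.2)
  rw [hΨ, indicator_of_mem hx] at hd
  -- `Ψ_t(x) = Ψ_{s₀ + t}(x/2)`: the generator is a derivative at the interior time `s₀`.
  refine hd.tendsto_slope_zero_right.congr' ?_
  filter_upwards [self_mem_nhdsWithin] with t ht
  rw [add_comm s₀ t, ← hG.assocPsi_assocPsi (le_of_lt ht) hs₀.le ⟨hx₀.1.le, hx₀.2.le⟩, hΨ,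
    smul_eq_mul, inv_mul_eq_div]

lemma le_assocPsi_of_hasDerivAt_le (hG : IsFlowSpeed G) {γ γ' : ℝ → ℝ} {t τ : ℝ} (ht : 0 ≤ t)
    (hγ : ContinuousOn γ (Icc 0 t)) (hγI : MapsTo γ (Icc 0 t) (Ioo 0 1))
    (hγ' : ∀ σ ∈ Ioo 0 t, σ ≠ τ → HasDerivAt γ (γ' σ) σ)
    (hγG : ∀ σ ∈ Ioo 0 t, σ ≠ τ → γ' σ ≤ G (γ σ)) :
    γ t ≤ assocPsi G t (γ 0) := by
  have hc := hγI (left_mem_Icc.2 ht)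
  have hF : flowTime G (γ 0) (γ t) ≤ t := by
    have := le_of_hasDerivAt_nonpos_off_point (v := fun σ => flowTime G (γ 0) (γ σ) - σ) ht
      (((hG.continuousOn_flowTime hc).comp hγ hγI).sub continuousOn_id)
      (fun σ hσ hστ => ((hG.hasDerivAt_flowTime hc (hγI (Ioo_subset_Icc_self hσ))).comp σ
        (hγ' σ hσ hστ)).sub (hasDerivAt_id σ))
      (fun σ hσ hστ => sub_nonpos.2 ((inv_mul_le_one₀ (hG.pos _ (hγI (Ioo_subset_Icc_self hσ)))).2
        (hγG σ hσ hστ)))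
    simpa [flowTime_self] using this
  rcases lt_or_ge (γ t) (γ 0) with h | h
  · exact h.le.trans (assocPsi_mem_Icc G t (Ioo_subset_Icc_self hc)).1
  · exact (hG.le_assocPsi_iff hc.1 ⟨h, (hγI (right_mem_Icc.2 ht)).2⟩ ht).2 hF

end IsFlowSpeed

lemma ConcaveOn.comp_one_sub (hG : ConcaveOn ℝ (Ioo 0 1) G) :
    ConcaveOn ℝ (Ioo 0 1) fun s => G (1 - s) := by
  refine ⟨convex_Ioo 0 1, fun x hx y hy a b ha hb hab => ?_⟩
  have h := hG.2 (Ioo.one_sub_mem hx) (Ioo.one_sub_mem hy) ha hb hab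
  simp only [smul_eq_mul] at h ⊢
  convert h using 2
  linear_combination -hab

lemma ConcaveOn.mul_le_apply_mul (hG : ConcaveOn ℝ (Ioo 0 1) G)
    (hnn : ∀ x ∈ Ioo (0:ℝ) 1, 0 ≤ G x) {m q : ℝ} (hm : m ∈ Ioc (0:ℝ) 1)
    (hq : q ∈ Ioo (0:ℝ) 1) : m * G q ≤ G (m * q) := by
  rcases hm.2.eq_or_lt with rfl | hm1
  · simp
  have hmq : m * q < q := mul_lt_of_lt_one_left hq.1 hm1
  have hmqI : m * q ∈ Ioo (0:ℝ) 1 := ⟨mul_pos hm.1 hq.1, hmq.trans hq.2⟩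
  -- concavity on `p < m q < q` for `p > 0`, then `p → 0`
  have key : ∀ p ∈ Ioo 0 (m * q), (m * q - p) * G q ≤ (q - p) * G (m * q) := by
    intro p hp
    have hpI : p ∈ Ioo (0:ℝ) 1 := ⟨hp.1, hp.2.trans hmqI.2⟩
    have h := hG.slope_anti_adjacent hpI hq hp.2 hmq
    rw [div_le_div_iff₀ (by linarith) (by linarith [hp.2])] at h
    nlinarith [hnn p hpI, hp.2]
  have hcont : Continuous fun p : ℝ => ((m * q - p) * G q, (q - p) * G (m * q)) := by fun_prop
  have hlim := (hcont.tendsto 0).mono_left (nhdsWithin_le_nhds (s := Ioi 0))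
  have h := le_of_tendsto_of_tendsto (Tendsto.fst_nhds hlim) (Tendsto.snd_nhds hlim)
    (Filter.mem_of_superset (Ioo_mem_nhdsGT hmqI.1) fun p hp => key p hp)
  simp only [sub_zero] at h
  nlinarith [hq.1]

lemma concaveOn_Icc_indicator_Ioo (hG : ConcaveOn ℝ (Ioo 0 1) G)
    (hnn : ∀ x ∈ Ioo (0:ℝ) 1, 0 ≤ G x) : ConcaveOn ℝ (Icc 0 1) ((Ioo 0 1).indicator G) := by
  refine LinearOrder.concaveOn_of_lt (convex_Icc 0 1) fun p hp q hq hpq a b ha hb hab => ?_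
  simp only [smul_eq_mul]
  have hmem : a * p + b * q ∈ Ioo (0:ℝ) 1 :=
    Ioo_subset_Ioo hp.1 hq.2 (openSegment_eq_Ioo hpq ▸ ⟨a, b, ha, hb, hab, rfl⟩)
  rw [indicator_of_mem hmem]
  rcases hp.1.eq_or_lt with rfl | hp0 <;> rcases hq.2.eq_or_lt with rfl | hq1
  · simpa [indicator_of_notMem] using (hnn _ hmem)
  · have hqI : q ∈ Ioo (0:ℝ) 1 := ⟨hpq, hq1⟩
    simp only [indicator_of_notMem (show (0:ℝ) ∉ Ioo 0 1 from fun h => lt_irrefl _ h.1),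
      indicator_of_mem hqI, mul_zero, zero_add]
    exact hG.mul_le_apply_mul hnn ⟨hb, by linarith⟩ hqI
  · have hpI : p ∈ Ioo (0:ℝ) 1 := ⟨hp0, hpq⟩
    simp only [indicator_of_mem hpI,
      indicator_of_notMem (show (1:ℝ) ∉ Ioo 0 1 from fun h => lt_irrefl _ h.2), mul_zero, add_zero]
    have := hG.comp_one_sub.mul_le_apply_mul (fun x hx => hnn _ (Ioo.one_sub_mem hx))
      ⟨ha, by linarith⟩ (Ioo.one_sub_mem hpI)
    rwa [sub_sub_cancel, show 1 - a * (1 - p) = a * p + b * 1 by linear_combination -hab] at this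
  · simp only [indicator_of_mem (show p ∈ Ioo 0 1 from ⟨hp0, hpq.trans hq1⟩),
      indicator_of_mem (show q ∈ Ioo 0 1 from ⟨hp0.trans hpq, hq1⟩)]
    simpa using hG.2 ⟨hp0, hpq.trans hq1⟩ ⟨hp0.trans hpq, hq1⟩ ha.le hb.le hab

lemma mul_add_mul_le_assocPsi (hG : ConcaveOn ℝ (Ioo 0 1) G)
    (hpos : ∀ x ∈ Ioo (0:ℝ) 1, 0 < G x) {t a b l m : ℝ} (ht : 0 ≤ t) (ha : a ∈ Icc (0:ℝ) 1)
    (hb : b ∈ Icc (0:ℝ) 1) (hab : a < b) (hl : 0 < l) (hm : 0 < m) (hlm : l + m = 1) :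
    l * assocPsi G t a + m * assocPsi G t b ≤ assocPsi G t (l * a + m * b) := by
  have hF := IsFlowSpeed.of_concaveOn hG hpos
  set c := l * a + m * b
  have hc : c ∈ Ioo a b := openSegment_eq_Ioo hab ▸ ⟨l, m, hl, hm, hlm, rfl⟩
  have hcI : c ∈ Icc (0:ℝ) 1 := ⟨ha.1.trans hc.1.le, hc.2.le.trans hb.2⟩
  have hΨa := mapsTo_assocPsi G t ha
  have hΨb := mapsTo_assocPsi G t hb
  rcases (assocPsi_mem_Icc G t hcI).2.lt_or_eq with hc1 | hc1
  swap
  · rw [hc1]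
    nlinarith [hΨa.2, hΨb.2]
  obtain ⟨τ, hτ⟩ := hF.exists_hasDerivAt_assocPsi_time hb
  have hA1 : ∀ σ ∈ Icc 0 t, assocPsi G σ a < 1 := fun σ hσ =>
    ((hF.monotoneOn_assocPsi hσ.1 ha hcI hc.1.le).trans
      (hF.assocPsi_mono_time hcI hσ.1 hσ.2)).trans_lt hc1
  set γ := fun σ => l * assocPsi G σ a + m * assocPsi G σ b
  have hγI : MapsTo γ (Icc 0 t) (Ioo 0 1) := by
    intro σ hσ
    have h₁ := assocPsi_mem_Icc G σ ha
    have h₂ := assocPsi_mem_Icc G σ hb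
    constructor
    · calc 0 < l * a + m * b := ha.1.trans_lt hc.1
        _ ≤ l * assocPsi G σ a + m * assocPsi G σ b := by gcongr; exacts [h₁.1, h₂.1]
    · calc γ σ < l * 1 + m * 1 := add_lt_add_of_lt_of_le
            (mul_lt_mul_of_pos_left (hA1 σ hσ) hl) (mul_le_mul_of_nonneg_left h₂.2 hm.le)
        _ = 1 := by rw [mul_one, mul_one, hlm]
  have hγ0 : γ 0 = c := by
    simp only [γ, hF.assocPsi_zero_apply ha, hF.assocPsi_zero_apply hb, c]
  rw [← hγ0]
  refine hF.le_assocPsi_of_hasDerivAt_le (τ := τ)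
    (γ' := fun σ => l * (Ioo 0 1).indicator G (assocPsi G σ a) +
      m * (Ioo 0 1).indicator G (assocPsi G σ b)) ht ?_ hγI ?_ ?_
  · have hcont := fun {x} (hx : x ∈ Icc (0:ℝ) 1) =>
      (hF.continuousOn_assocPsi_time hx).mono (Icc_subset_Ici_self : Icc (0:ℝ) t ⊆ Ici 0)
    exact (continuousOn_const.mul (hcont ha)).add (continuousOn_const.mul (hcont hb))
  · intro σ hσ hστ
    exact ((hF.hasDerivAt_assocPsi_time_of_lt_one ⟨ha.1, hab.trans_le hb.2⟩ hσ.1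
      (hA1 σ (Ioo_subset_Icc_self hσ))).const_mul l).add ((hτ σ hσ.1 hστ).const_mul m)
  · intro σ hσ _
    have h := (concaveOn_Icc_indicator_Ioo hG fun x hx => (hpos x hx).le).2
      (mapsTo_assocPsi G σ ha) (mapsTo_assocPsi G σ hb) hl.le hm.le hlm
    rwa [smul_eq_mul, smul_eq_mul, smul_eq_mul, smul_eq_mul,
      indicator_of_mem (hγI (Ioo_subset_Icc_self hσ))] at h

lemma concaveOn_assocPsi (hG : ConcaveOn ℝ (Ioo 0 1) G) (hpos : ∀ x ∈ Ioo (0:ℝ) 1, 0 < G x)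
    {t : ℝ} (ht : 0 ≤ t) : ConcaveOn ℝ (Icc 0 1) (assocPsi G t) :=
  LinearOrder.concaveOn_of_lt (convex_Icc 0 1) fun _ ha _ hb hab _ _ hl hm hlm => by
    simpa only [smul_eq_mul] using mul_add_mul_le_assocPsi hG hpos ht ha hb hab hl hm hlm

lemma isConcaveDistortionSemigroup_assocPsi (hG : ConcaveOn ℝ (Ioo 0 1) G)
    (hpos : ∀ x ∈ Ioo (0:ℝ) 1, 0 < G x) : IsConcaveDistortionSemigroup (assocPsi G) :=
  have hF := IsFlowSpeed.of_concaveOn hG hpos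
  ⟨fun _ ht => ⟨hF.monotoneOn_assocPsi ht, concaveOn_assocPsi hG hpos ht,
      assocPsi_apply_zero G _, assocPsi_apply_one G _⟩,
    fun _ _ hs ht _ hx => hF.assocPsi_assocPsi hs ht hx⟩

lemma IsConcaveDistortion.mapsTo_s18 {Ψ : ℝ → ℝ} (h : IsConcaveDistortion Ψ) :
    MapsTo Ψ (Icc 0 1) (Icc 0 1) := fun _ hx =>
  ⟨h.2.2.1 ▸ h.1 (left_mem_Icc.2 zero_le_one) hx hx.1,
    h.2.2.2 ▸ h.1 hx (right_mem_Icc.2 zero_le_one) hx.2⟩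

lemma IsConcaveDistortionSemigroup.congr {Ψ Φ : ℝ → ℝ → ℝ} (h : IsConcaveDistortionSemigroup Φ)
    (hΨ : ∀ t, 0 ≤ t → EqOn (Ψ t) (Φ t) (Icc 0 1)) : IsConcaveDistortionSemigroup Ψ := by
  refine ⟨fun t ht => ?_, fun s t hs ht x hx => ?_⟩
  · obtain ⟨hmono, hconc, h0, h1⟩ := h.1 t ht
    exact ⟨hmono.congr (hΨ t ht).symm, hconc.congr (hΨ t ht).symm,
      (hΨ t ht (left_mem_Icc.2 zero_le_one)).trans h0,
      (hΨ t ht (right_mem_Icc.2 zero_le_one)).trans h1⟩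
  · rw [hΨ t ht hx, hΨ s hs ((h.1 t ht).mapsTo_s18 hx), h.2 s t hs ht x hx,
      hΨ (s + t) (add_nonneg hs ht) hx]

namespace IsFlowSpeed

lemma comp_one_sub (hG : IsFlowSpeed G) : IsFlowSpeed fun s => G (1 - s) :=
  ⟨hG.continuousOn.comp (continuousOn_const.sub continuousOn_id) fun _ => Ioo.one_sub_mem,
    fun _ hx => hG.pos _ (Ioo.one_sub_mem hx)⟩

/-- In the main case `0 < y ≤ 1 - x` both sides say `F_y(1-x) < t`, because for `G(1-·)` the
flow time from `x` to `1-y` is `F_y(1-x)`. -/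
lemma one_sub_lt_assocPsi_iff (hG : IsFlowSpeed G) {t x y : ℝ} (ht : 0 ≤ t)
    (hx : x ∈ Icc (0:ℝ) 1) (hy : y ∈ Icc (0:ℝ) 1) :
    1 - x < assocPsi G t y ↔ 1 - assocPsi (fun s => G (1 - s)) t x < y := by
  have hΦ := assocPsi_mem_Icc (fun s => G (1 - s)) t hx
  have hΨ := assocPsi_mem_Icc G t hy
  rcases hy.1.eq_or_lt with rfl | hy0
  · rw [assocPsi_apply_zero]
    exact iff_of_false (by linarith [hx.2]) (by linarith [hΦ.2])
  rcases hx.1.eq_or_lt with rfl | hx0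
  · rw [assocPsi_apply_zero]
    exact iff_of_false (by linarith [hΨ.2]) (by linarith [hy.2])
  rcases lt_or_ge (1 - x) y with hxy | hyx
  · exact iff_of_true (hxy.trans_le hΨ.1) (by linarith [hΦ.1])
  rw [← not_le, ← not_le, hG.assocPsi_le_iff hy0 ⟨hyx, by linarith⟩ ht, le_sub_comm,
    hG.comp_one_sub.assocPsi_le_iff hx0 ⟨by linarith, by linarith⟩ ht, flowTime_comp_one_sub,
    sub_sub_cancel]

lemma distortionInv_assocPsi (hG : IsFlowSpeed G) {t x : ℝ} (ht : 0 ≤ t)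
    (hx : x ∈ Icc (0:ℝ) 1) :
    distortionInv (assocPsi G t) (1 - x) = 1 - assocPsi (fun s => G (1 - s)) t x := by
  set w := 1 - assocPsi (fun s => G (1 - s)) t x
  have hw : w ≤ 1 := by linarith [(mapsTo_assocPsi (fun s => G (1 - s)) t hx).1]
  have hset : {y | y ∈ Icc (0:ℝ) 1 ∧ 1 - x < assocPsi G t y} = Ioc w 1 := by
    ext y
    refine ⟨fun h => ⟨(hG.one_sub_lt_assocPsi_iff ht hx h.1).1 h.2, h.1.2⟩, fun h => ?_⟩
    have hy : y ∈ Icc (0:ℝ) 1 :=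
      ⟨by linarith [h.1, (assocPsi_mem_Icc (fun s => G (1 - s)) t hx).2], h.2⟩
    exact ⟨hy, (hG.one_sub_lt_assocPsi_iff ht hx hy).2 h.1⟩
  rw [distortionInv, hset]
  rcases hw.lt_or_eq with hw1 | hw1
  · rw [union_eq_left.2 (singleton_subset_iff.2 (right_mem_Ioc.2 hw1)), csInf_Ioc hw1]
  · simp [hw1]

end IsFlowSpeed

/-- duality: the dual family `Ψ̃_t(x) = 1 - Ψ_t⁻¹(1-x)` of the
family associated with a positive concave `G` is a concave distortion semigroup
with generator `x ↦ G(1-x)`. -/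
theorem stmt_18 (G : ℝ → ℝ)
    (hG : ConcaveOn ℝ (Set.Ioo 0 1) G)
    (hGpos : ∀ x ∈ Set.Ioo (0:ℝ) 1, 0 < G x) :
    IsConcaveDistortionSemigroup
      (fun t x => 1 - distortionInv (assocPsi G t) (1 - x)) ∧
    ∀ x ∈ Set.Ioo (0:ℝ) 1,
      Filter.Tendsto
        (fun t => (1 - distortionInv (assocPsi G t) (1 - x) - x) / t)
        (nhdsWithin 0 (Set.Ioi 0)) (nhds (G (1 - x))) := by
  have hR : ConcaveOn ℝ (Ioo 0 1) fun s => G (1 - s) := hG.comp_one_sub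
  have hRpos : ∀ x ∈ Ioo (0:ℝ) 1, 0 < G (1 - x) := fun x hx => hGpos _ (Ioo.one_sub_mem hx)
  have hF := IsFlowSpeed.of_concaveOn hG hGpos
  have hdual : ∀ t, 0 ≤ t → EqOn (fun x => 1 - distortionInv (assocPsi G t) (1 - x))
      (assocPsi (fun s => G (1 - s)) t) (Icc 0 1) := fun t ht x hx => by
    simp only [hF.distortionInv_assocPsi ht hx, sub_sub_cancel]
  refine ⟨(isConcaveDistortionSemigroup_assocPsi hR hRpos).congr hdual, fun x hx => ?_⟩
  refine ((IsFlowSpeed.of_concaveOn hR hRpos).tendsto_slope_assocPsi hx).congr' ?_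
  filter_upwards [self_mem_nhdsWithin] with t ht
  have h : 1 - distortionInv (assocPsi G t) (1 - x) = assocPsi (fun s => G (1 - s)) t x :=
    hdual t (le_of_lt ht) (Ioo_subset_Icc_self hx)
  rw [h]
end
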